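/- arXiv:2511.07270 — 5 statements merged into one kernel-verified Lean document; each statement's English description precedes it below -/
import Mathlib

section
/- Let p, k ∈ ℕ with k ≤ p, let U = [U⋆, U⊥] ∈ O(p) be orthogonal with U⋆ ∈ ℝ^{p×k}, and let V ∈ O(p,k) be such that V̄⋆ := U⋆ᵀV ∈ ℝ^{k×k} is invertible. Then: (i) Q(V) is a k×k orthogonal matrix; (ii) I_k − Z(V)ᵀZ(V) = V̄⋆V̄⋆ᵀ, so in particular I_k − Z(V)ᵀZ(V) is positive semidefinite; and (iii) V = U·[(I_k − Z(V)ᵀZ(V))^{1/2}; Z(V)]·Q(V), where [(I_k − Z(V)ᵀZ(V))^{1/2}; Z(V)] denotes the p×k matrix stacking the positive semidefinite square root (I_k − Z(V)ᵀZ(V))^{1/2} on top of Z(V) ∈ ℝ^{(p−k)×k}. -/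
open MeasureTheory Matrix Filter Topology ProbabilityTheory
open scoped ENNReal NNReal

noncomputable section

/-- Entrywise (Borel) measurable space on real matrices. -/
instance matrixMeasurableSpace {m n : Type*} : MeasurableSpace (Matrix m n ℝ) :=
  MeasurableSpace.pi

/-- The Stiefel manifold `O(p,k)` of `p × k` real matrices with orthonormal columns. -/
def Stiefel (p k : ℕ) : Type :=
  {V : Matrix (Fin p) (Fin k) ℝ // Vᵀ * V = 1}

instance {p k : ℕ} : MeasurableSpace (Stiefel p k) :=
  inferInstanceAs (MeasurableSpace {V : Matrix (Fin p) (Fin k) ℝ // Vᵀ * V = 1})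

/-- Left rotation of a Stiefel point by an orthogonal matrix. -/
def stiefelRot {p k : ℕ} {A : Matrix (Fin p) (Fin p) ℝ} (hA : Aᵀ * A = 1)
    (V : Stiefel p k) : Stiefel p k :=
  ⟨A * V.1, by
    rw [Matrix.transpose_mul, Matrix.mul_assoc, ← Matrix.mul_assoc Aᵀ A V.1, hA,
      Matrix.one_mul]
    exact V.2⟩

/-- `ξ` is the uniform (Haar) distribution on `O(p,k)`: it is characterized (uniquely) as a
rotation-invariant Borel probability measure on the Stiefel manifold. -/
def IsUniformStiefel (p k : ℕ) (ξ : Measure (Stiefel p k)) : Prop :=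
  IsProbabilityMeasure ξ ∧
    ∀ (A : Matrix (Fin p) (Fin p) ℝ) (hA : Aᵀ * A = 1),
      Measure.map (stiefelRot hA) ξ = ξ

/-- Normalizing constant of the Gibbs distribution. -/
def gibbsZ {p k : ℕ} (ξ : Measure (Stiefel p k)) (S : Matrix (Fin p) (Fin p) ℝ)
    (β : ℝ) : ℝ :=
  ∫ V : Stiefel p k, Real.exp ((p : ℝ) * β / 2 * ((V.1)ᵀ * S * V.1).trace) ∂ξ

/-- The Gibbs distribution `ν(· | S, β, k)` relative to the uniform distribution `ξ` on
`O(p,k)`. -/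
def gibbs {p k : ℕ} (ξ : Measure (Stiefel p k)) (S : Matrix (Fin p) (Fin p) ℝ)
    (β : ℝ) : Measure (Stiefel p k) :=
  ξ.withDensity fun V =>
    ENNReal.ofReal
      (Real.exp ((p : ℝ) * β / 2 * ((V.1)ᵀ * S * V.1).trace) / gibbsZ ξ S β)

/-- `eigAt l j p` is the (0-based) `j`-th entry of the decreasing eigenvalue list `l p`
(junk value `0` when `j ≥ p`). -/
def eigAt (l : ∀ p, Fin p → ℝ) (j p : ℕ) : ℝ :=
  if h : j < p then l p ⟨j, h⟩ else 0

/-- `eig1 l j` : 0-based `j`-th entry of a single eigenvalue list. -/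
def eig1 {p : ℕ} (l : Fin p → ℝ) (j : ℕ) : ℝ :=
  if h : j < p then l ⟨j, h⟩ else 0

/-- Indices of the top `k` eigenvalues. -/
def topIdx (p k : ℕ) : Finset (Fin p) := Finset.univ.filter fun i => (i : ℕ) < k

/-- Indices of the smallest `p - k` eigenvalues. -/
def bulkIdx (p k : ℕ) : Finset (Fin p) := Finset.univ.filter fun i => k ≤ (i : ℕ)

/-- Hilbert transform `H_μ(x) = ∫ dμ(t) / (x - t)`. -/
def hilbert (μ : Measure ℝ) (x : ℝ) : ℝ := ∫ t, (x - t)⁻¹ ∂μ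

/-- Derivative of the Hilbert transform, `H'_μ(x) = -∫ dμ(t) / (x - t)²`. -/
def hilbertDeriv (μ : Measure ℝ) (x : ℝ) : ℝ := -∫ t, ((x - t) ^ 2)⁻¹ ∂μ

/-- Assumption (MAT) on a sequence of symmetric matrices `S p`, presented together with (any)
orthogonal eigendecomposition `S p = U p * diagonal (l p) * (U p)ᵀ` with decreasing
eigenvalues `l p`.  The limits are `γ 1 ≥ ⋯ ≥ γ k > γ (k+1) > 0` (1-based indexing) and the
limiting spectral measure is `μ`, a probability measure with compact support contained in
`(-∞, γ (k+1)]`. -/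
def AssumptionMAT (k : ℕ) (γ : ℕ → ℝ) (μ : Measure ℝ)
    (S : ∀ p, Matrix (Fin p) (Fin p) ℝ) (l : ∀ p, Fin p → ℝ)
    (U : ∀ p, Matrix (Fin p) (Fin p) ℝ) : Prop :=
  0 < k ∧
  (∀ p, (U p)ᵀ * U p = 1) ∧
  (∀ p, S p = U p * Matrix.diagonal (l p) * (U p)ᵀ) ∧
  (∀ p, Antitone (l p)) ∧
  (∀ i j : ℕ, 1 ≤ i → i ≤ j → j ≤ k + 1 → γ j ≤ γ i) ∧
  γ (k + 1) < γ k ∧ 0 < γ (k + 1) ∧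
  IsProbabilityMeasure μ ∧
  (∃ a : ℝ, μ (Set.Icc a (γ (k + 1)))ᶜ = 0) ∧
  (∀ i : ℕ, 1 ≤ i → i ≤ k + 1 →
    Tendsto (fun p : ℕ => eigAt l (i - 1) p) atTop (nhds (γ i))) ∧
  (∀ f : BoundedContinuousFunction ℝ ℝ,
    Tendsto (fun p : ℕ => ((p : ℝ) - (k : ℝ))⁻¹ * ∑ i ∈ bulkIdx p k, f (l p i))
      atTop (nhds (∫ t, f t ∂μ)))

/-- Frobenius norm. -/
def frob {m n : Type*} [Fintype m] [Fintype n] (A : Matrix m n ℝ) : ℝ :=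
  Real.sqrt (∑ i, ∑ j, A i j ^ 2)

/-- `ℓ² → ℓ²` operator norm. -/
def opNorm {m n : Type*} [Fintype m] [Fintype n] (A : Matrix m n ℝ) : ℝ :=
  sSup {r : ℝ | ∃ x : n → ℝ, (∑ j, x j ^ 2) ≤ 1 ∧ r = Real.sqrt (∑ i, (A.mulVec x i) ^ 2)}

/-- The `p × k` matrix formed by the first `k` columns of `U` (junk `0` when `p < k`). -/
def firstCols (p k : ℕ) (U : Matrix (Fin p) (Fin p) ℝ) : Matrix (Fin p) (Fin k) ℝ :=
  Matrix.of fun r j => if h : (j : ℕ) < p then U r ⟨j, h⟩ else 0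

/-- The `p × (p-k)` matrix formed by the last `p - k` columns of `U`. -/
def lastCols (p k : ℕ) (U : Matrix (Fin p) (Fin p) ℝ) : Matrix (Fin p) (Fin (p - k)) ℝ :=
  Matrix.of fun r c => U r ⟨k + (c : ℕ), by have := c.isLt; omega⟩

/-- Total variation distance `sup_A |μ(A) - ν(A)|`. -/
def tvDist {Ω : Type*} [MeasurableSpace Ω] (μ ν : Measure Ω) : ℝ :=
  sSup {r : ℝ | ∃ A : Set Ω, MeasurableSet A ∧ r = |(μ A).toReal - (ν A).toReal|}

/-- Trade-off function `T(ν₀, ν₁)(α)`. -/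
def tradeoff {Ω : Type*} [MeasurableSpace Ω] (ν₀ ν₁ : Measure Ω) (α : ℝ) : ℝ :=
  sInf {r : ℝ | ∃ φ : Ω → ℝ, Measurable φ ∧ (∀ x, φ x ∈ Set.Icc (0 : ℝ) 1) ∧
    (∫ x, φ x ∂ν₀) ≤ α ∧ r = 1 - ∫ x, φ x ∂ν₁}

open Classical in
/-- Rényi divergence of order `a` of `ν₁` with respect to `ν₀` (with value `⊤` when
`ν₁` is not absolutely continuous w.r.t. `ν₀`). -/
def renyiDiv {Ω : Type*} [MeasurableSpace Ω] (a : ℝ) (ν₁ ν₀ : Measure Ω) : EReal :=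
  if ν₁ ≪ ν₀ then
    (((a - 1)⁻¹ * Real.log (∫ x, ((ν₁.rnDeriv ν₀ x).toReal) ^ a ∂ν₀) : ℝ) : EReal)
  else ⊤

/-- Sample covariance of a dataset. -/
def sampleCov (p : ℕ) (X : Multiset (Fin p → ℝ)) : Matrix (Fin p) (Fin p) ℝ :=
  ((Multiset.card X : ℝ))⁻¹ • (X.map fun x => vecMulVec x x).sum

/-- Assumption (DATA). -/
def AssumptionDATA (k : ℕ) (θ : ℝ) (γ : ℕ → ℝ) (μ : Measure ℝ)
    (X : ∀ p, Multiset (Fin p → ℝ)) (l : ∀ p, Fin p → ℝ)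
    (U : ∀ p, Matrix (Fin p) (Fin p) ℝ) : Prop :=
  0 < θ ∧
  (∀ p, ∀ x ∈ X p, (∑ j, x j ^ 2) ≤ (p : ℝ)) ∧
  Tendsto (fun p : ℕ => (Multiset.card (X p) : ℝ) / (p : ℝ) ^ ((3 : ℝ) / 2)) atTop
    (nhds θ) ∧
  AssumptionMAT k γ μ (fun p => sampleCov p (X p)) l U

open Classical in
/-- `Y` is a neighboring dataset of `X`: add one norm-bounded point or remove one point. -/
def IsNeighbor (p : ℕ) (X Y : Multiset (Fin p → ℝ)) : Prop :=
  (∃ x : Fin p → ℝ, (∑ j, x j ^ 2) ≤ (p : ℝ) ∧ Y = x ::ₘ X) ∨ ∃ x ∈ X, Y = X.erase x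

open Classical in
/-- Neighboring datasets without the norm constraint. -/
def IsNeighborFree (p : ℕ) (X Y : Multiset (Fin p → ℝ)) : Prop :=
  (∃ x : Fin p → ℝ, Y = x ::ₘ X) ∨ ∃ x ∈ X, Y = X.erase x

/-- The asymptotic privacy parameter `σ²_β` (with `Hk = H_μ(γ_k)`, `Hk' = H'_μ(γ_k)`). -/
def sigmaBetaSq (θ Δ Hk Hk' β : ℝ) : ℝ :=
  if Hk - Δ * Hk' ≤ β then
    1 / (2 * Δ * θ ^ 2) * ((β - Hk) ^ 2 / (2 * (β - Hk) + Δ * Hk'))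
  else -Hk' / (2 * θ ^ 2)

/-- Empirical Hilbert transform `H_Σ`. -/
def empH (p k : ℕ) (l : Fin p → ℝ) (x : ℝ) : ℝ :=
  ((p : ℝ))⁻¹ * ∑ i ∈ bulkIdx p k, (x - l i)⁻¹

/-- Empirical kernel `K_Σ`. -/
def empK (p k : ℕ) (l : Fin p → ℝ) (x y : ℝ) : ℝ :=
  ((p : ℝ))⁻¹ * ∑ i ∈ bulkIdx p k, ((x - l i) * (y - l i))⁻¹

/-- The variance function `σ²_Σ(E, β)`, expressed through the eigendecomposition
`Σ = U diag(l) Uᵀ` (decreasing `l`); `(Uᵀ E U) j m = u_jᵀ E u_m`. -/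
def varFun (p k : ℕ) (l : Fin p → ℝ) (U E : Matrix (Fin p) (Fin p) ℝ) (β : ℝ) : ℝ :=
  1 / 2 * ∑ j ∈ topIdx p k, ∑ m ∈ topIdx p k,
      empK p k l (l j) (l m) * ((Uᵀ * E * U) j m) ^ 2 +
    ∑ j ∈ topIdx p k, ∑ i ∈ bulkIdx p k,
      (β - empH p k l (l j)) / (l j - l i) * ((Uᵀ * E * U) i j) ^ 2

/-- `j`-th column of a square matrix. -/
def matCol {p : ℕ} (U : Matrix (Fin p) (Fin p) ℝ) (j : Fin p) : Fin p → ℝ := fun r => U r j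

/-- The centering matrix `M_β(Σ)`, via the eigendecomposition `Σ = U diag(l) Uᵀ`. -/
def centerM (p k : ℕ) (l : Fin p → ℝ) (U : Matrix (Fin p) (Fin p) ℝ) (β : ℝ) :
    Matrix (Fin p) (Fin p) ℝ :=
  (∑ j ∈ topIdx p k, (1 - empH p k l (l j) / β) • vecMulVec (matCol U j) (matCol U j)) +
    ((p : ℝ) * β)⁻¹ •
      ∑ j ∈ topIdx p k, ∑ i ∈ bulkIdx p k,
        (l j - l i)⁻¹ • vecMulVec (matCol U i) (matCol U i)

open Classical in
/-- Spectral functional calculus for symmetric matrices (junk value `0` otherwise). -/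
def matFun {k : ℕ} (f : ℝ → ℝ) (S : Matrix (Fin k) (Fin k) ℝ) :
    Matrix (Fin k) (Fin k) ℝ :=
  if hS : S.IsHermitian then
    (hS.eigenvectorUnitary : Matrix (Fin k) (Fin k) ℝ) *
        Matrix.diagonal (fun i => f (hS.eigenvalues i)) *
      star (hS.eigenvectorUnitary : Matrix (Fin k) (Fin k) ℝ)
  else 0

/-- Vertical stacking of a `k × k` block on top of a `(p-k) × k` block. -/
def vstack {p k : ℕ} (A : Matrix (Fin k) (Fin k) ℝ)
    (B : Matrix (Fin (p - k)) (Fin k) ℝ) : Matrix (Fin p) (Fin k) ℝ :=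
  Matrix.of fun r c =>
    if h : (r : ℕ) < k then A ⟨r, h⟩ c
    else B ⟨(r : ℕ) - k, by have := r.isLt; omega⟩ c

/-- The law of the Gaussian matrix `Z` with independent entries
`Z i j ∼ N(0, 1/(β p (λ_{j+1} - λ_{k+i+1})))` (paper indexing). -/
def gaussZMeasure (p k : ℕ) (l : Fin p → ℝ) (β : ℝ) :
    Measure (Matrix (Fin (p - k)) (Fin k) ℝ) :=
  Measure.pi fun _i : Fin (p - k) => Measure.pi fun _j : Fin k =>
    gaussianReal 0 (Real.toNNReal ((β * p * (eig1 l (_j : ℕ) - eig1 l (k + (_i : ℕ))))⁻¹))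

/-- Output distribution of the sampling algorithm, as a measure on `p × k` matrices. -/
def samplerLaw (p k : ℕ) (U : Matrix (Fin p) (Fin p) ℝ) (l : Fin p → ℝ) (β : ℝ)
    (κ : Measure (Stiefel k k)) : Measure (Matrix (Fin p) (Fin k) ℝ) :=
  Measure.map
    (fun QZ : Stiefel k k × Matrix (Fin (p - k)) (Fin k) ℝ =>
      U * vstack (matFun (fun t => Real.sqrt (max t 0)) (1 - (QZ.2)ᵀ * QZ.2)) QZ.2 *
        (QZ.1).1)
    (κ.prod (gaussZMeasure p k l β))

/-- `V̄⋆ = U⋆ᵀ V`. -/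
def Vbar (p k : ℕ) (U : Matrix (Fin p) (Fin p) ℝ) (V : Matrix (Fin p) (Fin k) ℝ) :
    Matrix (Fin k) (Fin k) ℝ :=
  (firstCols p k U)ᵀ * V

/-- `Q(V) = ((V̄⋆ V̄⋆ᵀ)^{1/2})⁻¹ V̄⋆` (Mathlib's matrix inverse is `0` on singular input). -/
def Qfun (p k : ℕ) (U : Matrix (Fin p) (Fin p) ℝ) (V : Matrix (Fin p) (Fin k) ℝ) :
    Matrix (Fin k) (Fin k) ℝ :=
  (matFun Real.sqrt (Vbar p k U V * (Vbar p k U V)ᵀ))⁻¹ * Vbar p k U V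

/-- `Z(V) = V̄⊥ Q(V)ᵀ`. -/
def Zfun (p k : ℕ) (U : Matrix (Fin p) (Fin p) ℝ) (V : Matrix (Fin p) (Fin k) ℝ) :
    Matrix (Fin (p - k)) (Fin k) ℝ :=
  (lastCols p k U)ᵀ * V * (Qfun p k U V)ᵀ

/-- Lebesgue measure on real matrices. -/
def matVolume (m n : ℕ) : Measure (Matrix (Fin m) (Fin n) ℝ) :=
  Measure.pi fun _ : Fin m => Measure.pi fun _ : Fin n => (volume : Measure ℝ)

open Classical in
/-- Tie-averaged, centered and normalized rank transform of the point `x` within the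
dataset `X`. -/
def rankVec (p : ℕ) (X : Multiset (Fin p → ℝ)) (x : Fin p → ℝ) : Fin p → ℝ := fun j =>
  2 / ((Multiset.card X : ℝ) - 1) *
    ((((X.filter fun y => y j < x j).card : ℝ) +
        (((X.filter fun y => y j = x j).card : ℝ) + 1) / 2) -
      ((Multiset.card X : ℝ) + 1) / 2)

/-- The rank covariance matrix `Σ_rk(X)`. -/
def rankCov (p : ℕ) (X : Multiset (Fin p → ℝ)) : Matrix (Fin p) (Fin p) ℝ :=
  sampleCov p (X.map (rankVec p X))

/-- Assumption (DATA-RANK). -/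
def AssumptionDATARank (k : ℕ) (θ : ℝ) (γ : ℕ → ℝ) (μ : Measure ℝ)
    (X : ∀ p, Multiset (Fin p → ℝ)) (l : ∀ p, Fin p → ℝ)
    (U : ∀ p, Matrix (Fin p) (Fin p) ℝ) : Prop :=
  0 < θ ∧
  Tendsto (fun p : ℕ => (Multiset.card (X p) : ℝ) / (p : ℝ) ^ ((3 : ℝ) / 2)) atTop
    (nhds θ) ∧
  AssumptionMAT k γ μ (fun p => rankCov p (X p)) l U

end

/-!
Write `W = V̄⋆` and `B = V̄⊥`. Since the columns of `U` split into those of `U⋆` and `U⊥`,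
orthonormality of `V` reads `WᵀW + BᵀB = 1`. With `S = (WWᵀ)^{1/2}`, `Q = S⁻¹W` is the orthogonal
polar factor of `W`, so `S Q = W` and `Q Wᵀ = S`. Conjugating `BᵀB = 1 - WᵀW` by `Q` gives
`ZᵀZ = 1 - S² = 1 - WWᵀ`, and then `U [S; Z] Q = U⋆ W + U⊥ B = UUᵀV = V`.
-/

section PolarFactor

variable {n R : Type*} [Fintype n] [DecidableEq n] [CommRing R] {S W : Matrix n n R}

lemma Matrix.isUnit_det_of_mul_self_eq (hSS : S * S = W * Wᵀ) (hW : IsUnit W.det) :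
    IsUnit S.det := by
  have h : IsUnit (S.det * S.det) := by
    rw [← det_mul, hSS, det_mul, det_transpose]
    exact hW.mul hW
  exact isUnit_of_mul_isUnit_left h

lemma Matrix.inv_mul_mul_transpose_inv_mul_eq_one (hS : Sᵀ = S) (hSS : S * S = W * Wᵀ)
    (hW : IsUnit W.det) : S⁻¹ * W * (S⁻¹ * W)ᵀ = 1 := by
  have hSd := isUnit_det_of_mul_self_eq hSS hW
  rw [transpose_mul, transpose_nonsing_inv, hS]
  calc S⁻¹ * W * (Wᵀ * S⁻¹) = S⁻¹ * (S * S) * S⁻¹ := by simp only [hSS, Matrix.mul_assoc]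
    _ = 1 := by rw [nonsing_inv_mul_cancel_left S S hSd, mul_nonsing_inv S hSd]

lemma Matrix.inv_mul_mul_transpose (hSS : S * S = W * Wᵀ) (hW : IsUnit W.det) :
    S⁻¹ * W * Wᵀ = S := by
  rw [Matrix.mul_assoc, ← hSS, nonsing_inv_mul_cancel_left S S (isUnit_det_of_mul_self_eq hSS hW)]

end PolarFactor

lemma Matrix.transpose_mul_transpose_mul_self_eq {m n R : Type*} [Fintype m] [Fintype n]
    [DecidableEq n] [CommRing R] {Q S W : Matrix n n R} {B : Matrix m n R} (hQ : Q * Qᵀ = 1)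
    (hQW : Q * Wᵀ = S) (hS : Sᵀ = S) (hB : Bᵀ * B = 1 - Wᵀ * W) :
    (B * Qᵀ)ᵀ * (B * Qᵀ) = 1 - S * S := by
  have hWQ : W * Qᵀ = S := by simpa [hS] using congrArg transpose hQW
  calc (B * Qᵀ)ᵀ * (B * Qᵀ) = Q * (Bᵀ * B) * Qᵀ := by
        simp only [transpose_mul, transpose_transpose, Matrix.mul_assoc]
    _ = Q * Qᵀ - (Q * Wᵀ) * (W * Qᵀ) := by
        simp only [hB, Matrix.mul_sub, Matrix.sub_mul, Matrix.mul_one, Matrix.mul_assoc]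
    _ = 1 - S * S := by rw [hQ, hQW, hWQ]

section Sqrt

variable {n : Type*} [Fintype n] [DecidableEq n]

lemma Matrix.PosSemidef.cfc_sqrt_mul_self {A : Matrix n n ℝ} (hA : A.PosSemidef) :
    cfc Real.sqrt A * cfc Real.sqrt A = A := by
  have h : (spectrum ℝ A).EqOn (fun x => Real.sqrt x * Real.sqrt x) id := by
    rw [hA.1.spectrum_real_eq_range_eigenvalues]
    rintro _ ⟨i, rfl⟩
    exact Real.mul_self_sqrt (hA.eigenvalues_nonneg i)
  rw [← cfc_mul Real.sqrt Real.sqrt A, cfc_congr h]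
  exact cfc_id ℝ A hA.1

lemma Matrix.transpose_cfc (f : ℝ → ℝ) (A : Matrix n n ℝ) : (cfc f A)ᵀ = cfc f A := by
  rw [← conjTranspose_eq_transpose_of_trivial]
  exact (cfc_predicate f A : IsSelfAdjoint _)

end Sqrt

lemma matFun_eq_cfc {k : ℕ} {S : Matrix (Fin k) (Fin k) ℝ} (hS : S.IsHermitian) (f : ℝ → ℝ) :
    matFun f S = cfc f S := by
  rw [matFun, dif_pos hS, hS.cfc_eq]
  rfl

section Blocks

variable {p k : ℕ}

lemma Fin.sum_univ_eq_sum_castLE_add_sum_addNat {M : Type*} [AddCommMonoid M] (hpk : k ≤ p)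
    (f : Fin p → M) :
    ∑ i, f i = ∑ j : Fin k, f (Fin.castLE hpk j)
      + ∑ c : Fin (p - k), f ⟨k + c, by omega⟩ := by
  rw [← Fin.sum_congr' f (Nat.add_sub_cancel' hpk), Fin.sum_univ_add]
  rfl

lemma mul_vstack (hpk : k ≤ p) (U : Matrix (Fin p) (Fin p) ℝ)
    (X : Matrix (Fin k) (Fin k) ℝ) (Y : Matrix (Fin (p - k)) (Fin k) ℝ) :
    U * vstack X Y = firstCols p k U * X + lastCols p k U * Y := by
  ext r c
  simp only [Matrix.add_apply, mul_apply, firstCols, lastCols, vstack, of_apply]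
  rw [Fin.sum_univ_eq_sum_castLE_add_sum_addNat hpk]
  congr 1
  · refine Finset.sum_congr rfl fun j _ => ?_
    simp only [Fin.val_castLE, dif_pos j.isLt, dif_pos (lt_of_lt_of_le j.isLt hpk)]
    rfl
  · refine Finset.sum_congr rfl fun j _ => ?_
    rw [dif_neg (by simp)]
    simp only [Nat.add_sub_cancel_left]

lemma firstCols_mul_transpose_add_lastCols_mul_transpose (hpk : k ≤ p)
    (U : Matrix (Fin p) (Fin p) ℝ) :
    firstCols p k U * (firstCols p k U)ᵀ + lastCols p k U * (lastCols p k U)ᵀ = U * Uᵀ := by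
  ext r s
  simp only [Matrix.add_apply, mul_apply, transpose_apply, firstCols, lastCols, of_apply]
  rw [Fin.sum_univ_eq_sum_castLE_add_sum_addNat hpk]
  congr 1
  refine Finset.sum_congr rfl fun j _ => ?_
  rw [dif_pos (lt_of_lt_of_le j.isLt hpk), dif_pos (lt_of_lt_of_le j.isLt hpk)]
  rfl

end Blocks

/-- If `V ∈ O(p,k)` is such that `V̄⋆ = U⋆ᵀV` is invertible, then
(i) `Q(V)` is orthogonal; (ii) `I - Z(V)ᵀZ(V) = V̄⋆V̄⋆ᵀ`, in particular it is positive
semidefinite; (iii) `V = U ⬝ [(I - Z(V)ᵀZ(V))^{1/2}; Z(V)] ⬝ Q(V)`. -/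
theorem statement12
    (p k : ℕ) (hpk : k ≤ p)
    (U : Matrix (Fin p) (Fin p) ℝ) (hU : Uᵀ * U = 1)
    (V : Matrix (Fin p) (Fin k) ℝ) (hV : Vᵀ * V = 1)
    (hinv : IsUnit (Vbar p k U V)) :
    -- (i) Q(V) is a k × k orthogonal matrix
    ((Qfun p k U V)ᵀ * Qfun p k U V = 1 ∧ Qfun p k U V * (Qfun p k U V)ᵀ = 1) ∧
    -- (ii) I - Z(V)ᵀ Z(V) = V̄⋆ V̄⋆ᵀ, which is positive semidefinite
    ((1 - (Zfun p k U V)ᵀ * Zfun p k U V = Vbar p k U V * (Vbar p k U V)ᵀ) ∧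
      (1 - (Zfun p k U V)ᵀ * Zfun p k U V).PosSemidef) ∧
    -- (iii) reconstruction of V
    V = U * vstack (matFun Real.sqrt (1 - (Zfun p k U V)ᵀ * Zfun p k U V)) (Zfun p k U V) *
          Qfun p k U V := by
  set W := Vbar p k U V
  set B := (lastCols p k U)ᵀ * V
  have hW : IsUnit W.det := (isUnit_iff_isUnit_det W).mp hinv
  have hWW : (W * Wᵀ).PosSemidef := by
    simpa [conjTranspose_eq_transpose_of_trivial] using posSemidef_self_mul_conjTranspose W
  set S := matFun Real.sqrt (W * Wᵀ)
  have hS : Sᵀ = S := by simp only [S, matFun_eq_cfc hWW.1, transpose_cfc]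
  have hSS : S * S = W * Wᵀ := by simp only [S, matFun_eq_cfc hWW.1, hWW.cfc_sqrt_mul_self]
  have hQ : Qfun p k U V = S⁻¹ * W := rfl
  have hQQ : Qfun p k U V * (Qfun p k U V)ᵀ = 1 :=
    hQ ▸ inv_mul_mul_transpose_inv_mul_eq_one hS hSS hW
  have hQQ' : (Qfun p k U V)ᵀ * Qfun p k U V = 1 := mul_eq_one_comm.mp hQQ
  have hUU : U * Uᵀ = 1 := mul_eq_one_comm.mp hU
  have hV_split : firstCols p k U * W + lastCols p k U * B = V := by
    simp only [W, B, Vbar, ← Matrix.mul_assoc, ← Matrix.add_mul,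
      firstCols_mul_transpose_add_lastCols_mul_transpose hpk, hUU, Matrix.one_mul]
  have hWB : Wᵀ * W + Bᵀ * B = 1 := by
    calc Wᵀ * W + Bᵀ * B = Vᵀ * (firstCols p k U * W + lastCols p k U * B) := by
          simp only [W, B, Vbar, transpose_mul, transpose_transpose, Matrix.mul_add,
            Matrix.mul_assoc]
      _ = 1 := by rw [hV_split, hV]
  have hB : Bᵀ * B = 1 - Wᵀ * W := eq_sub_of_add_eq' hWB
  have hZ : 1 - (Zfun p k U V)ᵀ * Zfun p k U V = W * Wᵀ := by
    rw [Zfun, transpose_mul_transpose_mul_self_eq hQQ (hQ ▸ inv_mul_mul_transpose hSS hW) hS hB,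
      sub_sub_cancel, hSS]
  refine ⟨⟨hQQ', hQQ⟩, ⟨hZ, hZ ▸ hWW⟩, ?_⟩
  rw [hZ, mul_vstack hpk, Matrix.add_mul, Matrix.mul_assoc, Matrix.mul_assoc, hQ,
    mul_nonsing_inv_cancel_left S W (isUnit_det_of_mul_self_eq hSS hW), ← hQ, Zfun,
    Matrix.mul_assoc, hQQ', Matrix.mul_one, hV_split]
end

section
/- Let (Σ_p) satisfy Assumption (MAT) with λ_k(Σ_p) > λ_{k+1}(Σ_p) for every p, let β_p → β ∈ (0,∞), and let Σ̃_p := Σ_p + E_p/√p where (E_p) are real symmetric p×p matrices with sup_p ‖E_p‖_F < ∞. Then there exist a constant C > 0 and p₀ ∈ ℕ such that for all p ≥ p₀ one has λ_k(Σ̃_p) > λ_{k+1}(Σ̃_p) (so both centering matrices are defined) and ‖M_{β_p}(Σ_p) − M_{β_p}(Σ̃_p)‖_F ≤ C/√p. -/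
open MeasureTheory Matrix Filter Topology ProbabilityTheory
open scoped ENNReal NNReal

/-!
Write `Σ = U diag(λ) Uᵀ` and `Σ̃ = Ũ diag(λ̃) Ũᵀ`. The centering matrix is a spectral function,
`M_β(Σ) = U diag(d) Uᵀ`, so `‖M_β(Σ) - M_β(Σ̃)‖_F` is the Frobenius norm of the matrix with entries
`(d_i - d̃_j) A_ij`, where `A = UᵀŨ` is orthogonal. Weyl's inequality gives
`|λ_i - λ̃_i| ≤ ‖E‖_F / √p`, so eventually both spectra keep a gap `g` between the top `k` and the
bulk eigenvalues, and the Sylvester relation `(λ̃_j - λ_i) A_ij = (Uᵀ E Ũ)_ij / √p` controls the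
entries: top–top ones through the Lipschitz continuity of the empirical Hilbert transform away
from the bulk, top–bulk ones because there `|λ_i - λ̃_j| ≥ g`, and bulk–bulk ones because those
coefficients are `O(1/p)` while `‖A‖_F = √p`.
-/

open Finset

section Frobenius

variable {m n : Type*} [Fintype m] [Fintype n]

section Norm

attribute [local instance] Matrix.frobeniusNormedAddCommGroup Matrix.frobeniusNormedSpace

lemma frob_eq_norm (A : Matrix m n ℝ) : frob A = ‖A‖ := by
  rw [frob, Matrix.frobenius_norm_def, Real.sqrt_eq_rpow]
  simp [Real.norm_eq_abs, sq_abs]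

lemma frob_add_le (A B : Matrix m n ℝ) : frob (A + B) ≤ frob A + frob B := by
  simp only [frob_eq_norm]
  exact norm_add_le A B

lemma frob_smul (c : ℝ) (A : Matrix m n ℝ) : frob (c • A) = |c| * frob A := by
  simp only [frob_eq_norm]
  rw [norm_smul, Real.norm_eq_abs]

lemma frob_neg (A : Matrix m n ℝ) : frob (-A) = frob A := by
  simp only [frob_eq_norm, norm_neg]

lemma frob_map_abs (A : Matrix m n ℝ) : frob (A.map abs) = frob A := by
  simp only [frob_eq_norm]
  exact Matrix.frobenius_norm_map_eq A abs fun a => by simp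

end Norm

lemma frob_nonneg (A : Matrix m n ℝ) : 0 ≤ frob A := Real.sqrt_nonneg _

lemma frob_le_frob_of_abs_le {A B : Matrix m n ℝ} (h : ∀ i j, |A i j| ≤ |B i j|) :
    frob A ≤ frob B :=
  Real.sqrt_le_sqrt <| sum_le_sum fun i _ => sum_le_sum fun j _ => sq_le_sq.mpr (h i j)

lemma frob_sq (A : Matrix m n ℝ) : frob A ^ 2 = ∑ i, ∑ j, A i j ^ 2 :=
  Real.sq_sqrt (by positivity)

lemma frob_sq_eq_trace (A : Matrix m n ℝ) : frob A ^ 2 = (A * Aᵀ).trace := by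
  rw [frob_sq]
  simp [Matrix.trace, Matrix.mul_apply, sq]

lemma frob_eq_of_sq_eq {A B : Matrix m n ℝ} (h : frob A ^ 2 = frob B ^ 2) : frob A = frob B :=
  (sq_eq_sq₀ (frob_nonneg A) (frob_nonneg B)).mp h

lemma frob_orthogonal_mul [DecidableEq m] {U : Matrix m m ℝ} (hU : Uᵀ * U = 1)
    (A : Matrix m n ℝ) : frob (U * A) = frob A := by
  refine frob_eq_of_sq_eq ?_
  rw [frob_sq_eq_trace, frob_sq_eq_trace, Matrix.transpose_mul, Matrix.mul_assoc,
    Matrix.trace_mul_comm, Matrix.mul_assoc, Matrix.mul_assoc, hU, Matrix.mul_one]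

lemma frob_mul_orthogonal [DecidableEq n] {V : Matrix n n ℝ} (hV : V * Vᵀ = 1)
    (A : Matrix m n ℝ) : frob (A * V) = frob A := by
  refine frob_eq_of_sq_eq ?_
  rw [frob_sq_eq_trace, frob_sq_eq_trace, Matrix.transpose_mul, Matrix.mul_assoc,
    ← Matrix.mul_assoc V, hV, Matrix.one_mul]

lemma frob_of_orthogonal [DecidableEq m] {U : Matrix m m ℝ} (hU : Uᵀ * U = 1) :
    frob U = Real.sqrt (Fintype.card m) := by
  have h1 : frob (1 : Matrix m m ℝ) ^ 2 = Fintype.card m := by simp [frob_sq_eq_trace]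
  rw [← Matrix.mul_one U, frob_orthogonal_mul hU, ← h1, Real.sqrt_sq (frob_nonneg _)]

lemma abs_le_one_of_orthogonal [DecidableEq m] {U : Matrix m m ℝ} (hU : Uᵀ * U = 1) (i j : m) :
    |U i j| ≤ 1 := by
  have hcol : ∑ r, U r j ^ 2 = 1 := by
    simpa [Matrix.mul_apply, sq] using congrArg (fun M : Matrix m m ℝ => M j j) hU
  rw [← sq_le_one_iff_abs_le_one, ← hcol]
  exact single_le_sum (f := fun r => U r j ^ 2) (fun _ _ => sq_nonneg _) (mem_univ i)

lemma dotProduct_mulVec_le_frob (E : Matrix m m ℝ) (x : m → ℝ) :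
    x ⬝ᵥ (E *ᵥ x) ≤ frob E * (x ⬝ᵥ x) := by
  have hx : x ⬝ᵥ x = Real.sqrt (∑ ij : m × m, (x ij.1 * x ij.2) ^ 2) := by
    rw [Fintype.sum_prod_type]
    simp_rw [mul_pow, ← mul_sum, ← sum_mul, ← sq]
    rw [Real.sqrt_sq (by positivity)]
    simp [dotProduct, sq]
  calc x ⬝ᵥ (E *ᵥ x) = ∑ ij : m × m, E ij.1 ij.2 * (x ij.1 * x ij.2) := by
        simp only [Fintype.sum_prod_type, dotProduct, Matrix.mulVec, mul_sum]
        exact sum_congr rfl fun i _ => sum_congr rfl fun j _ => by ring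
    _ ≤ Real.sqrt (∑ ij : m × m, E ij.1 ij.2 ^ 2) *
          Real.sqrt (∑ ij : m × m, (x ij.1 * x ij.2) ^ 2) :=
        Real.sum_mul_le_sqrt_mul_sqrt _ _ _
    _ = frob E * (x ⬝ᵥ x) := by rw [hx, Fintype.sum_prod_type]; rfl

end Frobenius

section Weyl

variable {n : Type*} [Fintype n] [DecidableEq n] {p : ℕ}

lemma dotProduct_conj_diagonal_mulVec (U : Matrix n n ℝ) (l x : n → ℝ) :
    x ⬝ᵥ ((U * diagonal l * Uᵀ) *ᵥ x) = (Uᵀ *ᵥ x) ⬝ᵥ (diagonal l *ᵥ (Uᵀ *ᵥ x)) := by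
  rw [← mulVec_mulVec, ← mulVec_mulVec, dotProduct_mulVec, ← mulVec_transpose]

lemma dotProduct_transpose_mulVec_self {U : Matrix n n ℝ} (hU : U * Uᵀ = 1)
    (x : n → ℝ) : (Uᵀ *ᵥ x) ⬝ᵥ (Uᵀ *ᵥ x) = x ⬝ᵥ x := by
  rw [dotProduct_mulVec, vecMul_transpose, mulVec_mulVec, hU, one_mulVec, dotProduct_comm]

lemma exists_ne_zero_eq_zero_above_mulVec_eq_zero_below (B : Matrix (Fin p) (Fin p) ℝ)
    (j : Fin p) :
    ∃ v : Fin p → ℝ, v ≠ 0 ∧ (∀ i, j < i → v i = 0) ∧ ∀ m, m < j → (B *ᵥ v) m = 0 := by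
  let ι : Fin (j + 1) → Fin p := Fin.castLE j.isLt
  let π : Fin j → Fin p := Fin.castLE j.isLt.le
  let f : (Fin (j + 1) → ℝ) →ₗ[ℝ] (Fin j → ℝ) :=
    LinearMap.funLeft ℝ ℝ π ∘ₗ B.mulVecLin ∘ₗ Function.ExtendByZero.linearMap ℝ ι
  obtain ⟨w, hw, hw0⟩ := Submodule.exists_mem_ne_zero_of_ne_bot
    (LinearMap.ker_ne_bot_of_finrank_lt (f := f) (by simp))
  have hι : Function.Injective ι := Fin.castLE_injective _
  refine ⟨Function.extend ι w 0, fun hv => hw0 (funext fun i => ?_), fun i hi => ?_,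
    fun m hm => ?_⟩
  · simpa [hι.extend_apply] using congrFun hv (ι i)
  · refine Function.extend_apply' _ _ _ fun ⟨i', hi'⟩ => ?_
    have := i'.isLt
    rw [← hi', Fin.lt_def, Fin.val_castLE] at hi
    omega
  · exact congrFun (LinearMap.mem_ker.mp hw) ⟨m, hm⟩

lemma dotProduct_diagonal_mulVec_le {l : Fin p → ℝ} (hl : Antitone l) {y : Fin p → ℝ}
    {j : Fin p} (hy : ∀ m, m < j → y m = 0) :
    y ⬝ᵥ (diagonal l *ᵥ y) ≤ l j * (y ⬝ᵥ y) := by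
  simp only [dotProduct, mulVec_diagonal, mul_sum]
  refine sum_le_sum fun m _ => ?_
  rcases lt_or_ge m j with hm | hm
  · simp [hy m hm]
  · nlinarith [hl hm, mul_self_nonneg (y m)]

lemma le_dotProduct_diagonal_mulVec {l : Fin p → ℝ} (hl : Antitone l) {y : Fin p → ℝ}
    {j : Fin p} (hy : ∀ i, j < i → y i = 0) :
    l j * (y ⬝ᵥ y) ≤ y ⬝ᵥ (diagonal l *ᵥ y) := by
  simp only [dotProduct, mulVec_diagonal, mul_sum]
  refine sum_le_sum fun i _ => ?_
  rcases lt_or_ge j i with hi | hi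
  · simp [hy i hi]
  · nlinarith [hl hi, mul_self_nonneg (y i)]

-- Courant–Fischer with a test vector in `span(ũ_0, …, ũ_j) ∩ span(u_0, …, u_{j-1})ᗮ`.
theorem eigenvalue_le_add_frob {l l' : Fin p → ℝ} {U U' E : Matrix (Fin p) (Fin p) ℝ}
    (hU : Uᵀ * U = 1) (hU' : U'ᵀ * U' = 1) (hl : Antitone l) (hl' : Antitone l')
    (h : U * diagonal l * Uᵀ + E = U' * diagonal l' * U'ᵀ) (j : Fin p) :
    l' j ≤ l j + frob E := by
  obtain ⟨v, hv0, hv_supp, hv_ker⟩ :=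
    exists_ne_zero_eq_zero_above_mulVec_eq_zero_below (Uᵀ * U') j
  set x := U' *ᵥ v
  have hxv : U'ᵀ *ᵥ x = v := by simp [x, mulVec_mulVec, hU']
  have hxy : Uᵀ *ᵥ x = (Uᵀ * U') *ᵥ v := mulVec_mulVec _ _ _
  have hvx : v ⬝ᵥ v = x ⬝ᵥ x := by
    rw [← hxv, dotProduct_transpose_mulVec_self (mul_eq_one_comm.mp hU')]
  have hyx : (Uᵀ *ᵥ x) ⬝ᵥ (Uᵀ *ᵥ x) = x ⬝ᵥ x :=
    dotProduct_transpose_mulVec_self (mul_eq_one_comm.mp hU) x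
  have hx_pos : 0 < x ⬝ᵥ x := by
    simpa [← hvx] using dotProduct_self_star_pos_iff.mpr hv0
  refine le_of_mul_le_mul_right ?_ hx_pos
  calc l' j * (x ⬝ᵥ x) = l' j * (v ⬝ᵥ v) := by rw [hvx]
    _ ≤ v ⬝ᵥ (diagonal l' *ᵥ v) := le_dotProduct_diagonal_mulVec hl' hv_supp
    _ = x ⬝ᵥ ((U * diagonal l * Uᵀ) *ᵥ x) + x ⬝ᵥ (E *ᵥ x) := by
      rw [← dotProduct_add, ← add_mulVec, h, dotProduct_conj_diagonal_mulVec, hxv]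
    _ ≤ l j * ((Uᵀ *ᵥ x) ⬝ᵥ (Uᵀ *ᵥ x)) + frob E * (x ⬝ᵥ x) := by
      rw [dotProduct_conj_diagonal_mulVec]
      exact add_le_add (dotProduct_diagonal_mulVec_le hl (by rwa [hxy]))
        (dotProduct_mulVec_le_frob E x)
    _ = (l j + frob E) * (x ⬝ᵥ x) := by rw [hyx]; ring

theorem abs_eigenvalue_sub_le_frob {l l' : Fin p → ℝ} {U U' E : Matrix (Fin p) (Fin p) ℝ}
    (hU : Uᵀ * U = 1) (hU' : U'ᵀ * U' = 1) (hl : Antitone l) (hl' : Antitone l')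
    (h : U * diagonal l * Uᵀ + E = U' * diagonal l' * U'ᵀ) (j : Fin p) :
    |l' j - l j| ≤ frob E := by
  have h' : U' * diagonal l' * U'ᵀ + -E = U * diagonal l * Uᵀ := by rw [← h]; abel
  have h1 := eigenvalue_le_add_frob hU hU' hl hl' h j
  have h2 := eigenvalue_le_add_frob hU' hU hl' hl h' j
  rw [frob_neg] at h2
  exact abs_sub_le_iff.mpr ⟨by linarith, by linarith⟩

end Weyl

section Centering

variable {p : ℕ}

def TopBulkGap (k : ℕ) (g : ℝ) (l l' : Fin p → ℝ) : Prop :=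
  ∀ i j : Fin p, (i : ℕ) < k → k ≤ (j : ℕ) → g ≤ l i - l' j

lemma abs_inv_mul_sum_le (s : Finset (Fin p)) (f : Fin p → ℝ) {M : ℝ} (hM : 0 ≤ M)
    (h : ∀ i ∈ s, |f i| ≤ M) : |(p : ℝ)⁻¹ * ∑ i ∈ s, f i| ≤ M := by
  rcases Nat.eq_zero_or_pos p with rfl | hp
  · simpa using hM
  have hcard : (s.card : ℝ) ≤ p := by exact_mod_cast (card_le_univ s).trans_eq (Fintype.card_fin p)
  calc |(p : ℝ)⁻¹ * ∑ i ∈ s, f i| ≤ (p : ℝ)⁻¹ * ∑ i ∈ s, |f i| := by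
        rw [abs_mul, abs_of_nonneg (by positivity)]
        exact mul_le_mul_of_nonneg_left (abs_sum_le_sum_abs _ _) (by positivity)
    _ ≤ (p : ℝ)⁻¹ * (p * M) := by
        gcongr
        exact (sum_le_card_nsmul s _ M h).trans (by rw [nsmul_eq_mul]; gcongr)
    _ = M := by field_simp

lemma abs_inv_sub_inv_le {a b g : ℝ} (hg : 0 < g) (ha : g ≤ a) (hb : g ≤ b) :
    |a⁻¹ - b⁻¹| ≤ |a - b| / g ^ 2 := by
  have ha0 : 0 < a := hg.trans_le ha
  have hb0 : 0 < b := hg.trans_le hb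
  rw [inv_sub_inv ha0.ne' hb0.ne', abs_div, abs_sub_comm, abs_of_pos (mul_pos ha0 hb0)]
  gcongr
  nlinarith

lemma abs_empH_le {k : ℕ} {l : Fin p → ℝ} {x g : ℝ} (hg : 0 < g)
    (h : ∀ i ∈ bulkIdx p k, g ≤ x - l i) : |empH p k l x| ≤ g⁻¹ :=
  abs_inv_mul_sum_le _ _ (inv_nonneg.mpr hg.le) fun i hi => by
    rw [abs_inv, abs_of_pos (hg.trans_le (h i hi))]
    exact inv_anti₀ hg (h i hi)

lemma abs_empH_sub_empH_le {k : ℕ} {l l' : Fin p → ℝ} {x y g ε : ℝ} (hg : 0 < g) (hε : 0 ≤ ε)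
    (hW : ∀ i, |l i - l' i| ≤ ε) (hx : ∀ i ∈ bulkIdx p k, g ≤ x - l i)
    (hy : ∀ i ∈ bulkIdx p k, g ≤ y - l' i) :
    |empH p k l x - empH p k l' y| ≤ (|x - y| + ε) / g ^ 2 := by
  rw [empH, empH, ← mul_sub, ← sum_sub_distrib]
  refine abs_inv_mul_sum_le _ _ (by positivity) fun i hi => ?_
  refine (abs_inv_sub_inv_le hg (hx i hi) (hy i hi)).trans ?_
  gcongr
  calc |x - l i - (y - l' i)| = |(x - y) - (l i - l' i)| := by ring_nf
    _ ≤ |x - y| + |l i - l' i| := abs_sub _ _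
    _ ≤ |x - y| + ε := by gcongr; exact hW i

lemma card_topIdx_le (p k : ℕ) : (topIdx p k).card ≤ k :=
  Fin.card_filter_val_lt.trans_le (min_le_right p k)

noncomputable def centerCoeff (p k : ℕ) (l : Fin p → ℝ) (β : ℝ) (i : Fin p) : ℝ :=
  if (i : ℕ) < k then 1 - empH p k l (l i) / β
  else ((p : ℝ) * β)⁻¹ * ∑ j ∈ topIdx p k, (l j - l i)⁻¹

lemma centerM_eq_conj_diagonal (p k : ℕ) (l : Fin p → ℝ) (U : Matrix (Fin p) (Fin p) ℝ)
    (β : ℝ) : centerM p k l U β = U * diagonal (centerCoeff p k l β) * Uᵀ := by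
  ext r s
  have hbulk : bulkIdx p k = univ.filter fun i : Fin p => ¬ (i : ℕ) < k := by
    ext i; simp [bulkIdx]
  rw [Matrix.mul_apply]
  simp only [centerM, Matrix.add_apply, Matrix.smul_apply, Matrix.sum_apply,
    vecMulVec_apply, matCol, smul_eq_mul, mul_diagonal, transpose_apply]
  rw [← sum_filter_add_sum_filter_not univ fun i : Fin p => (i : ℕ) < k, sum_comm, mul_sum,
    ← hbulk]
  congr 1 <;> refine sum_congr rfl fun m hm => ?_
  · simp only [centerCoeff, if_pos (mem_filter.mp hm).2]
    ring
  · simp only [centerCoeff, if_neg (not_lt.mpr (mem_filter.mp hm).2), mul_sum, sum_mul]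
    exact sum_congr rfl fun _ _ => by ring

variable {k : ℕ} {l l' : Fin p → ℝ} {β βlo g ε : ℝ}

lemma abs_centerCoeff_le_of_lt (hβlo : 0 < βlo) (hβ : βlo ≤ β) (hg : 0 < g)
    (hgap : TopBulkGap k g l l) {i : Fin p} (hi : (i : ℕ) < k) :
    |centerCoeff p k l β i| ≤ 1 + (βlo * g)⁻¹ := by
  have hH := abs_empH_le hg fun j hj => hgap i j hi (mem_filter.mp hj).2
  rw [centerCoeff, if_pos hi]
  calc |1 - empH p k l (l i) / β| ≤ 1 + |empH p k l (l i)| / β := by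
        simpa [abs_div, abs_of_pos (hβlo.trans_le hβ)] using abs_sub (1 : ℝ) (empH p k l (l i) / β)
    _ ≤ 1 + g⁻¹ / βlo := by gcongr
    _ = 1 + (βlo * g)⁻¹ := by rw [mul_inv, div_eq_mul_inv, mul_comm]

lemma abs_centerCoeff_le_of_le (hβlo : 0 < βlo) (hβ : βlo ≤ β) (hg : 0 < g)
    (hgap : TopBulkGap k g l l) {i : Fin p} (hi : k ≤ (i : ℕ)) :
    |centerCoeff p k l β i| ≤ k / (p * βlo * g) := by
  have hp : (0 : ℝ) < p := by exact_mod_cast i.pos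
  have hterm : ∀ j ∈ topIdx p k, |(l j - l i)⁻¹| ≤ g⁻¹ := fun j hj => by
    have := hgap j i (mem_filter.mp hj).2 hi
    rw [abs_inv, abs_of_pos (hg.trans_le this)]
    exact inv_anti₀ hg this
  have hβ0 : 0 < β := hβlo.trans_le hβ
  rw [centerCoeff, if_neg (not_lt.mpr hi), abs_mul,
    abs_of_pos (by positivity : 0 < ((p : ℝ) * β)⁻¹)]
  calc ((p : ℝ) * β)⁻¹ * |∑ j ∈ topIdx p k, (l j - l i)⁻¹| ≤ ((p : ℝ) * βlo)⁻¹ * (k * g⁻¹) := by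
        gcongr
        exact (abs_sum_le_sum_abs _ _).trans <| (sum_le_card_nsmul _ _ _ hterm).trans <| by
              rw [nsmul_eq_mul]; gcongr; exact card_topIdx_le p k
    _ = k / (p * βlo * g) := by field_simp

lemma abs_centerCoeff_le (hβlo : 0 < βlo) (hβ : βlo ≤ β) (hg : 0 < g)
    (hgap : TopBulkGap k g l l) (i : Fin p) :
    |centerCoeff p k l β i| ≤ 1 + (k + 1) / (βlo * g) := by
  rcases lt_or_ge (i : ℕ) k with hi | hi
  · refine (abs_centerCoeff_le_of_lt hβlo hβ hg hgap hi).trans ?_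
    rw [inv_eq_one_div]
    gcongr
    linarith [k.cast_nonneg (α := ℝ)]
  · refine (abs_centerCoeff_le_of_le hβlo hβ hg hgap hi).trans ?_
    have hp : (1 : ℝ) ≤ p := by exact_mod_cast i.pos
    calc (k : ℝ) / (p * βlo * g) ≤ k / (βlo * g) := by
          rw [mul_assoc]; exact div_le_div_of_nonneg_left (by positivity) (by positivity)
            (le_mul_of_one_le_left (by positivity) hp)
      _ ≤ 1 + (k + 1) / (βlo * g) := by
          have : (k : ℝ) / (βlo * g) ≤ (k + 1) / (βlo * g) := by gcongr; linarith
          linarith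

lemma abs_centerCoeff_sub_centerCoeff_le_of_lt (hβlo : 0 < βlo) (hβ : βlo ≤ β) (hg : 0 < g)
    (hε : 0 ≤ ε) (hW : ∀ i, |l i - l' i| ≤ ε) (hgap : TopBulkGap k g l l)
    (hgap' : TopBulkGap k g l' l') {i j : Fin p} (hi : (i : ℕ) < k) (hj : (j : ℕ) < k) :
    |centerCoeff p k l β i - centerCoeff p k l' β j| ≤ (|l i - l' j| + ε) / (g ^ 2 * βlo) := by
  have hH := abs_empH_sub_empH_le hg hε hW (fun m hm => hgap i m hi (mem_filter.mp hm).2)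
    (fun m hm => hgap' j m hj (mem_filter.mp hm).2)
  have hβ0 : 0 < β := hβlo.trans_le hβ
  rw [centerCoeff, centerCoeff, if_pos hi, if_pos hj, show ∀ x y : ℝ, 1 - x / β - (1 - y / β)
    = -((x - y) / β) by intros; ring, abs_neg, abs_div, abs_of_pos hβ0, ← div_div]
  gcongr

lemma abs_centerCoeff_sub_mul_le (hβlo : 0 < βlo) (hβ : βlo ≤ β) (hg : 0 < g) (hε : 0 ≤ ε)
    (hW : ∀ i, |l i - l' i| ≤ ε) (h₁ : TopBulkGap k g l l) (h₂ : TopBulkGap k g l l')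
    (h₃ : TopBulkGap k g l' l) (h₄ : TopBulkGap k g l' l') {i j : Fin p} {a f : ℝ}
    (ha : |a| ≤ 1) (haf : (l' j - l i) * a = f) :
    |(centerCoeff p k l β i - centerCoeff p k l' β j) * a| ≤
      (2 * (1 + (k + 1) / (βlo * g)) / g + 1 / (g ^ 2 * βlo)) * |f| +
        (if (i : ℕ) < k ∧ (j : ℕ) < k then ε / (g ^ 2 * βlo) else 0) +
        2 * k / (p * βlo * g) * |a| := by
  set D := 1 + (k + 1) / (βlo * g)
  set c := centerCoeff p k l β i - centerCoeff p k l' β j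
  have hfa : |l i - l' j| * |a| = |f| := by rw [← haf, abs_mul, abs_sub_comm]
  have hf : 2 * D / g * |f| ≤ (2 * D / g + 1 / (g ^ 2 * βlo)) * |f| := by
    gcongr; exact le_add_of_nonneg_right (by positivity)
  have hlast : 0 ≤ 2 * k / (p * βlo * g) * |a| := by positivity
  have hcross (hgd : g ≤ |l i - l' j|) (hik : ¬ ((i : ℕ) < k ∧ (j : ℕ) < k)) :
      |c * a| ≤ (2 * D / g + 1 / (g ^ 2 * βlo)) * |f| +
        (if (i : ℕ) < k ∧ (j : ℕ) < k then ε / (g ^ 2 * βlo) else 0) +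
        2 * k / (p * βlo * g) * |a| := by
    have hc : |c| ≤ 2 * D := (abs_sub _ _).trans <| by
      linarith [abs_centerCoeff_le hβlo hβ hg h₁ i, abs_centerCoeff_le hβlo hβ hg h₄ j]
    have : |c * a| ≤ 2 * D / g * |f| := calc
      |c * a| = |c| * |a| := abs_mul _ _
      _ ≤ 2 * D * |a| := by gcongr
      _ = 2 * D / g * (g * |a|) := by field_simp
      _ ≤ 2 * D / g * |f| := by rw [← hfa]; gcongr
    rw [if_neg hik]
    linarith
  rcases lt_or_ge (i : ℕ) k with hi | hi <;> rcases lt_or_ge (j : ℕ) k with hj | hj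
  · have htop := abs_centerCoeff_sub_centerCoeff_le_of_lt hβlo hβ hg hε hW h₁ h₄ hi hj
    have : |c * a| ≤ 1 / (g ^ 2 * βlo) * |f| + ε / (g ^ 2 * βlo) := calc
      |c * a| = |c| * |a| := abs_mul _ _
      _ ≤ (|l i - l' j| + ε) / (g ^ 2 * βlo) * |a| := by gcongr
      _ = 1 / (g ^ 2 * βlo) * |f| + ε / (g ^ 2 * βlo) * |a| := by rw [← hfa]; ring
      _ ≤ 1 / (g ^ 2 * βlo) * |f| + ε / (g ^ 2 * βlo) := by
        gcongr; exact mul_le_of_le_one_right (by positivity) ha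
    have hf' : 1 / (g ^ 2 * βlo) * |f| ≤ (2 * D / g + 1 / (g ^ 2 * βlo)) * |f| := by
      gcongr; exact le_add_of_nonneg_left (by positivity)
    rw [if_pos ⟨hi, hj⟩]
    linarith
  · exact hcross ((h₂ i j hi hj).trans (le_abs_self _)) (by omega)
  · exact hcross ((h₃ j i hj hi).trans (by rw [abs_sub_comm]; exact le_abs_self _)) (by omega)
  · have hc : |c| ≤ 2 * k / (p * βlo * g) := by
      rw [mul_div_assoc]
      linarith [abs_sub (centerCoeff p k l β i) (centerCoeff p k l' β j),
        abs_centerCoeff_le_of_le hβlo hβ hg h₁ hi, abs_centerCoeff_le_of_le hβlo hβ hg h₄ hj]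
    have : |c * a| ≤ 2 * k / (p * βlo * g) * |a| := by rw [abs_mul]; gcongr
    rw [if_neg (by omega)]
    have : 0 ≤ (2 * D / g + 1 / (g ^ 2 * βlo)) * |f| := by positivity
    linarith

lemma frob_topBlock_le (p k : ℕ) :
    frob (Matrix.of fun i j : Fin p => if (i : ℕ) < k ∧ (j : ℕ) < k then (1 : ℝ) else 0) ≤ k := by
  rw [frob, Real.sqrt_le_left (by positivity)]
  calc ∑ i : Fin p, ∑ j : Fin p, (Matrix.of fun i j : Fin p =>
        if (i : ℕ) < k ∧ (j : ℕ) < k then (1 : ℝ) else 0) i j ^ 2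
      = ((topIdx p k).card : ℝ) ^ 2 := by
        simp only [Matrix.of_apply, ite_pow, one_pow, ite_and]
        simp [sum_ite, topIdx, sq]
    _ ≤ (k : ℝ) ^ 2 := by gcongr; exact card_topIdx_le p k

lemma conj_diagonal_sub_conj_diagonal_eq {U U' : Matrix (Fin p) (Fin p) ℝ}
    (hU : Uᵀ * U = 1) (hU' : U'ᵀ * U' = 1) (d d' : Fin p → ℝ) :
    U * diagonal d * Uᵀ - U' * diagonal d' * U'ᵀ =
      U * Matrix.of (fun i j => (d i - d' j) * (Uᵀ * U') i j) * U'ᵀ := by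
  have hUU : U * Uᵀ = 1 := mul_eq_one_comm.mp hU
  have hUU' : U' * U'ᵀ = 1 := mul_eq_one_comm.mp hU'
  have : Matrix.of (fun i j => (d i - d' j) * (Uᵀ * U') i j) =
      diagonal d * (Uᵀ * U') - (Uᵀ * U') * diagonal d' := by
    ext i j; simp [diagonal_mul, mul_diagonal]; ring
  rw [this, Matrix.mul_sub, Matrix.sub_mul]
  congr 1
  · simp only [Matrix.mul_assoc, hUU', Matrix.mul_one]
  · simp only [← Matrix.mul_assoc, hUU, Matrix.one_mul]

lemma sub_mul_transpose_mul_apply {l l' : Fin p → ℝ} {U U' E : Matrix (Fin p) (Fin p) ℝ}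
    (hU : Uᵀ * U = 1) (hU' : U'ᵀ * U' = 1)
    (h : U * diagonal l * Uᵀ + E = U' * diagonal l' * U'ᵀ) (i j : Fin p) :
    (l' j - l i) * (Uᵀ * U') i j = (Uᵀ * E * U') i j := by
  have h' : diagonal l * (Uᵀ * U') + Uᵀ * E * U' = (Uᵀ * U') * diagonal l' := by
    have := congrArg (fun M => Uᵀ * M * U') h
    simp only [Matrix.mul_add, Matrix.add_mul, ← Matrix.mul_assoc, hU, Matrix.one_mul] at this
    simp only [Matrix.mul_assoc, hU', Matrix.mul_one] at this
    simpa only [Matrix.mul_assoc] using this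
  have := congrArg (fun M => M i j) h'
  simp only [Matrix.add_apply, diagonal_mul, mul_diagonal] at this
  linarith

theorem frob_centerM_sub_centerM_le {k : ℕ} {l l' : Fin p → ℝ}
    {U U' E : Matrix (Fin p) (Fin p) ℝ} {β βlo g ε : ℝ}
    (hU : Uᵀ * U = 1) (hU' : U'ᵀ * U' = 1)
    (h : U * diagonal l * Uᵀ + E = U' * diagonal l' * U'ᵀ)
    (hβlo : 0 < βlo) (hβ : βlo ≤ β) (hg : 0 < g) (hε : 0 ≤ ε) (hW : ∀ i, |l i - l' i| ≤ ε)
    (h₁ : TopBulkGap k g l l) (h₂ : TopBulkGap k g l l') (h₃ : TopBulkGap k g l' l)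
    (h₄ : TopBulkGap k g l' l') :
    frob (centerM p k l U β - centerM p k l' U' β) ≤
      (2 * (1 + (k + 1) / (βlo * g)) / g + 1 / (g ^ 2 * βlo)) * frob E +
        ε / (g ^ 2 * βlo) * k + 2 * k / (βlo * g * Real.sqrt p) := by
  set A := Uᵀ * U'
  set F := Uᵀ * E * U'
  set T := Matrix.of fun i j : Fin p => if (i : ℕ) < k ∧ (j : ℕ) < k then (1 : ℝ) else 0
  set a := 2 * (1 + (k + 1) / (βlo * g)) / g + 1 / (g ^ 2 * βlo)
  set b := ε / (g ^ 2 * βlo)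
  set c := 2 * k / (p * βlo * g)
  have hA : Aᵀ * A = 1 := by
    simp only [A, Matrix.transpose_mul, Matrix.transpose_transpose, Matrix.mul_assoc,
      ← Matrix.mul_assoc U, mul_eq_one_comm.mp hU, Matrix.one_mul, hU']
  have hF : frob F = frob E := by
    rw [frob_mul_orthogonal (mul_eq_one_comm.mp hU'),
      frob_orthogonal_mul (by simpa using mul_eq_one_comm.mp hU)]
  have hentry (i j : Fin p) : |(centerCoeff p k l β i - centerCoeff p k l' β j) * A i j| ≤
      |(a • F.map abs + b • T + c • A.map abs) i j| := by
    have hT : 0 ≤ T i j := by simp only [T, Matrix.of_apply]; split_ifs <;> norm_num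
    have hB : (a • F.map abs + b • T + c • A.map abs) i j = a * |F i j| + b * T i j + c * |A i j| :=
      rfl
    rw [hB, abs_of_nonneg (add_nonneg (add_nonneg (by positivity) (mul_nonneg (by positivity) hT))
      (by positivity))]
    exact (abs_centerCoeff_sub_mul_le hβlo hβ hg hε hW h₁ h₂ h₃ h₄
      (abs_le_one_of_orthogonal hA i j) (sub_mul_transpose_mul_apply hU hU' h i j)).trans_eq
      (by simp only [T, Matrix.of_apply, mul_ite, mul_one, mul_zero]; rfl)
  rw [centerM_eq_conj_diagonal, centerM_eq_conj_diagonal, conj_diagonal_sub_conj_diagonal_eq hU hU',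
    frob_mul_orthogonal (by simpa using hU'), frob_orthogonal_mul hU]
  calc _ ≤ frob (a • F.map abs + b • T + c • A.map abs) := frob_le_frob_of_abs_le hentry
    _ ≤ a * frob F + b * frob T + c * frob A := by
      refine (frob_add_le _ _).trans (add_le_add ((frob_add_le _ _).trans ?_) ?_) <;>
        simp only [frob_smul, frob_map_abs, abs_of_nonneg (by positivity : 0 ≤ a),
          abs_of_nonneg (by positivity : 0 ≤ b), abs_of_nonneg (by positivity : 0 ≤ c), le_refl]
    _ ≤ a * frob E + b * k + c * Real.sqrt p := by
      rw [hF, frob_of_orthogonal hA, Fintype.card_fin]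
      gcongr
      exact frob_topBlock_le p k
    _ = _ := by
      congr 1
      rw [show c * Real.sqrt p = 2 * k / (βlo * g) * (Real.sqrt p / p) by ring,
        Real.sqrt_div_self']
      ring

lemma topBulkGap_of_le {k : ℕ} {l l' : Fin p → ℝ} {g : ℝ} (hl : Antitone l) (hl' : Antitone l')
    (hk0 : 0 < k) (hkp : k < p) (h : g ≤ l ⟨k - 1, by omega⟩ - l' ⟨k, hkp⟩) :
    TopBulkGap k g l l' := fun i j hi hj =>
  h.trans (sub_le_sub (hl (Fin.le_def.mpr (by simp only; omega))) (hl' (Fin.mk_le_of_le_val hj)))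

theorem eigenvalue_gap_and_frob_centerM_sub_le {k : ℕ} (hk0 : 0 < k) (hkp : k < p)
    {l l' : Fin p → ℝ} {U U' E : Matrix (Fin p) (Fin p) ℝ} (hU : Uᵀ * U = 1) (hU' : U'ᵀ * U' = 1)
    (hl : Antitone l) (hl' : Antitone l') (h : U * diagonal l * Uᵀ + E = U' * diagonal l' * U'ᵀ)
    {β βlo g : ℝ} (hβlo : 0 < βlo) (hβ : βlo ≤ β) (hg : 0 < g)
    (hsep : g + 2 * frob E ≤ l ⟨k - 1, by omega⟩ - l ⟨k, hkp⟩) :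
    l' ⟨k, hkp⟩ < l' ⟨k - 1, by omega⟩ ∧
      frob (centerM p k l U β - centerM p k l' U' β) ≤
        (2 * (1 + (k + 1) / (βlo * g)) / g + (k + 1) / (g ^ 2 * βlo)) * frob E +
          2 * k / (βlo * g * Real.sqrt p) := by
  have hW (i : Fin p) : |l i - l' i| ≤ frob E := by
    rw [abs_sub_comm]; exact abs_eigenvalue_sub_le_frob hU hU' hl hl' h i
  have hW₁ := abs_le.mp (hW ⟨k - 1, by omega⟩)
  have hW₂ := abs_le.mp (hW ⟨k, hkp⟩)
  have gap {l₁ l₂ : Fin p → ℝ} (h₁ : Antitone l₁) (h₂ : Antitone l₂)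
      (h : g ≤ l₁ ⟨k - 1, by omega⟩ - l₂ ⟨k, hkp⟩) : TopBulkGap k g l₁ l₂ :=
    topBulkGap_of_le h₁ h₂ hk0 hkp h
  refine ⟨by linarith, ?_⟩
  refine (frob_centerM_sub_centerM_le hU hU' h hβlo hβ hg (frob_nonneg E) hW
    (gap hl hl (by linarith)) (gap hl hl' (by linarith)) (gap hl' hl (by linarith))
    (gap hl' hl' (by linarith))).trans_eq ?_
  ring

end Centering

open Filter in
/-- Perturbation bound for the centering matrix: for
`Σ̃_p = Σ_p + E_p/√p` (any sorted orthogonal eigendecomposition `Σ̃_p = Ũ_p diag(l̃_p) Ũ_pᵀ`),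
eventually `λ_k(Σ̃_p) > λ_{k+1}(Σ̃_p)` and
`‖M_{β_p}(Σ_p) - M_{β_p}(Σ̃_p)‖_F ≤ C/√p`. -/
theorem statement14
    (k : ℕ) (γ : ℕ → ℝ) (μ : Measure ℝ)
    (S : ∀ p, Matrix (Fin p) (Fin p) ℝ) (l : ∀ p, Fin p → ℝ)
    (U : ∀ p, Matrix (Fin p) (Fin p) ℝ)
    (hMAT : AssumptionMAT k γ μ S l U)
    (βs : ℕ → ℝ) (β : ℝ) (hβlim : Tendsto βs atTop (nhds β)) (hβ : 0 < β)
    (E : ∀ p, Matrix (Fin p) (Fin p) ℝ)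
    (hEbound : ∃ C : ℝ, ∀ p, frob (E p) ≤ C)
    -- any orthogonal eigendecomposition of `Σ̃_p = Σ_p + E_p/√p` with decreasing eigenvalues
    (lt : ∀ p, Fin p → ℝ) (Ut : ∀ p, Matrix (Fin p) (Fin p) ℝ)
    (hUt : ∀ p, (Ut p)ᵀ * Ut p = 1)
    (hdect : ∀ p, S p + (Real.sqrt (p : ℝ))⁻¹ • E p =
      Ut p * Matrix.diagonal (lt p) * (Ut p)ᵀ)
    (hmonot : ∀ p, Antitone (lt p)) :
    ∃ C : ℝ, 0 < C ∧ ∃ p₀ : ℕ, ∀ p ≥ p₀,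
      k < p ∧ eigAt lt k p < eigAt lt (k - 1) p ∧
      frob (centerM p k (l p) (U p) (βs p) - centerM p k (lt p) (Ut p) (βs p)) ≤
        C / Real.sqrt (p : ℝ) := by
  obtain ⟨hk0, hU, hdec, hl, -, hγgap, -, -, -, hconv, -⟩ := hMAT
  obtain ⟨CE, hCE⟩ := hEbound
  have hCE0 : 0 ≤ CE := (frob_nonneg _).trans (hCE 0)
  set g := (γ k - γ (k + 1)) / 2
  set K := 2 * (1 + (k + 1) / (β / 2 * g)) / g + (k + 1) / (g ^ 2 * (β / 2))
  have hg : 0 < g := by simp only [g]; linarith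
  have hgΔ : g < γ k - γ (k + 1) := by simp only [g]; linarith
  have hsqrt : Tendsto (fun p : ℕ => CE / Real.sqrt p) atTop (𝓝 0) :=
    tendsto_const_nhds.div_atTop (Real.tendsto_sqrt_atTop.comp tendsto_natCast_atTop_atTop)
  have hlim : Tendsto (fun p => eigAt l (k - 1) p - eigAt l k p - 2 * (CE / Real.sqrt p)) atTop
      (𝓝 (γ k - γ (k + 1))) := by
    simpa using ((hconv k hk0 (by omega)).sub (by simpa using hconv (k + 1) (by omega) le_rfl)).sub
      (hsqrt.const_mul 2)
  obtain ⟨p₀, hp₀⟩ := eventually_atTop.mp <| (hlim.eventually (lt_mem_nhds hgΔ)).and <|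
    (hβlim.eventually (lt_mem_nhds (by linarith : β / 2 < β))).and (eventually_gt_atTop k)
  refine ⟨K * CE + 2 * k / (β / 2 * g), by positivity, p₀, fun p hp => ?_⟩
  obtain ⟨hsep, hβp, hkp⟩ := hp₀ p hp
  have hE : frob ((Real.sqrt p)⁻¹ • E p) ≤ CE / Real.sqrt p := by
    rw [frob_smul, abs_inv, abs_of_nonneg (Real.sqrt_nonneg _), inv_mul_eq_div]
    exact div_le_div_of_nonneg_right (hCE p) (Real.sqrt_nonneg _)
  simp only [eigAt, dif_pos hkp, dif_pos (show k - 1 < p by omega)] at hsep ⊢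
  obtain ⟨hgap, hbound⟩ := eigenvalue_gap_and_frob_centerM_sub_le hk0 hkp (hU p) (hUt p) (hl p)
    (hmonot p) (hdec p ▸ hdect p) (by positivity) hβp.le hg (by linarith)
  refine ⟨hkp, hgap, hbound.trans ?_⟩
  calc _ ≤ K * (CE / Real.sqrt p) + 2 * k / (β / 2 * g * Real.sqrt p) := by gcongr
    _ = _ := by rw [add_div, div_div, mul_div_assoc K]
end

section
/- Let ν, ν̃, ν̄ be probability measures on a common measurable space. Then for every α ∈ [0,1], |T(ν, ν̃)(α) − T(ν, ν̄)(α)| ≤ TV(ν̃, ν̄). -/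
open MeasureTheory Matrix Filter Topology ProbabilityTheory
open scoped ENNReal NNReal

/-
Both trade-off functions are infima of `1 - ∫ φ` over the same family of tests `φ`, since the
level constraint only involves `ν`; so it suffices that `|∫ φ dν̃ - ∫ φ dν̄| ≤ TV(ν̃, ν̄)` for
every test `φ` with values in `[0, 1]`. For this, split the space along a Hahn decomposition
`s` of `ν̃` and `ν̄`: on `s` the difference of the integrals of `φ` is nonpositive, and on `sᶜ`
it is at most `ν̃(sᶜ) - ν̄(sᶜ)` because `1 - φ` is nonnegative there.
-/

open Set

section

variable {Ω : Type*} [MeasurableSpace Ω]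

lemma tvDist_comm (μ ν : Measure Ω) : tvDist μ ν = tvDist ν μ := by
  unfold tvDist
  congr 1
  ext r
  constructor <;> rintro ⟨A, hA, rfl⟩ <;> exact ⟨A, hA, abs_sub_comm _ _⟩

lemma abs_measure_sub_le_tvDist (μ ν : Measure Ω) [IsFiniteMeasure μ] [IsFiniteMeasure ν]
    {A : Set Ω} (hA : MeasurableSet A) : |(μ A).toReal - (ν A).toReal| ≤ tvDist μ ν := by
  refine le_csSup ⟨μ.real univ + ν.real univ, ?_⟩ ⟨A, hA, rfl⟩
  rintro _ ⟨B, -, rfl⟩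
  have hμ : μ.real B ≤ μ.real univ := measureReal_mono (subset_univ B)
  have hν : ν.real B ≤ ν.real univ := measureReal_mono (subset_univ B)
  rw [← measureReal_def, ← measureReal_def, abs_sub_le_iff]
  constructor <;> linarith [measureReal_nonneg (μ := μ) (s := B),
    measureReal_nonneg (μ := ν) (s := B)]

lemma integrable_of_mem_Icc {μ : Measure Ω} [IsFiniteMeasure μ] {φ : Ω → ℝ}
    (hφ : Measurable φ) (hφ01 : ∀ x, φ x ∈ Icc (0 : ℝ) 1) : Integrable φ μ :=
  Integrable.of_mem_Icc 0 1 hφ.aemeasurable (ae_of_all _ hφ01)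

lemma integral_sub_integral_le_tvDist (μ ν : Measure Ω) [IsFiniteMeasure μ] [IsFiniteMeasure ν]
    {φ : Ω → ℝ} (hφ : Measurable φ) (hφ01 : ∀ x, φ x ∈ Icc (0 : ℝ) 1) :
    ∫ x, φ x ∂μ - ∫ x, φ x ∂ν ≤ tvDist μ ν := by
  obtain ⟨s, hs⟩ := exists_isHahnDecomposition μ ν
  have hφμ : Integrable φ μ := integrable_of_mem_Icc hφ hφ01
  have hφν : Integrable φ ν := integrable_of_mem_Icc hφ hφ01
  have on_s : ∫ x in s, φ x ∂μ ≤ ∫ x in s, φ x ∂ν :=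
    integral_mono_measure hs.le_on (ae_of_all _ fun x => (hφ01 x).1) hφν.restrict
  have on_compl : ∫ x in sᶜ, (1 - φ x) ∂ν ≤ ∫ x in sᶜ, (1 - φ x) ∂μ :=
    integral_mono_measure hs.ge_on_compl (ae_of_all _ fun x => sub_nonneg.2 (hφ01 x).2)
      ((integrable_const 1).sub hφμ).restrict
  rw [integral_sub (integrable_const 1) hφν.restrict,
    integral_sub (integrable_const 1) hφμ.restrict, setIntegral_const, setIntegral_const,
    smul_eq_mul, smul_eq_mul, mul_one, mul_one] at on_compl
  calc ∫ x, φ x ∂μ - ∫ x, φ x ∂ν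
      = (∫ x in s, φ x ∂μ - ∫ x in s, φ x ∂ν) + (∫ x in sᶜ, φ x ∂μ - ∫ x in sᶜ, φ x ∂ν) := by
        rw [← integral_add_compl hs.measurableSet hφμ,
          ← integral_add_compl hs.measurableSet hφν]
        ring
    _ ≤ (μ sᶜ).toReal - (ν sᶜ).toReal := by
        rw [← measureReal_def, ← measureReal_def]
        linarith
    _ ≤ tvDist μ ν := (le_abs_self _).trans
        (abs_measure_sub_le_tvDist μ ν hs.measurableSet.compl)

lemma abs_integral_sub_integral_le_tvDist (μ ν : Measure Ω) [IsFiniteMeasure μ]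
    [IsFiniteMeasure ν] {φ : Ω → ℝ} (hφ : Measurable φ) (hφ01 : ∀ x, φ x ∈ Icc (0 : ℝ) 1) :
    |∫ x, φ x ∂μ - ∫ x, φ x ∂ν| ≤ tvDist μ ν := by
  rw [abs_sub_le_iff]
  exact ⟨integral_sub_integral_le_tvDist μ ν hφ hφ01,
    tvDist_comm μ ν ▸ integral_sub_integral_le_tvDist ν μ hφ hφ01⟩

lemma tradeoff_le (ν : Measure Ω) {κ : Measure Ω} [IsFiniteMeasure κ] {α : ℝ} {φ : Ω → ℝ}
    (hφ : Measurable φ) (hφ01 : ∀ x, φ x ∈ Icc (0 : ℝ) 1) (hφα : ∫ x, φ x ∂ν ≤ α) :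
    tradeoff ν κ α ≤ 1 - ∫ x, φ x ∂κ := by
  refine csInf_le ⟨1 - κ.real univ, ?_⟩ ⟨φ, hφ, hφ01, hφα, rfl⟩
  rintro _ ⟨ψ, hψ, hψ01, -, rfl⟩
  have : ∫ x, ψ x ∂κ ≤ ∫ _, (1 : ℝ) ∂κ :=
    integral_mono (integrable_of_mem_Icc hψ hψ01) (integrable_const 1) fun x => (hψ01 x).2
  rw [integral_const, smul_eq_mul, mul_one] at this
  linarith

lemma tradeoff_le_tradeoff_add_tvDist (ν ν₁ ν₂ : Measure Ω) [IsFiniteMeasure ν₁]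
    [IsFiniteMeasure ν₂] {α : ℝ} (hα : 0 ≤ α) :
    tradeoff ν ν₁ α ≤ tradeoff ν ν₂ α + tvDist ν₁ ν₂ := by
  rw [← sub_le_iff_le_add]
  refine le_csInf ⟨1, fun _ => 0, measurable_const, fun _ => ⟨le_rfl, zero_le_one⟩,
    by simpa using hα, by simp⟩ ?_
  rintro _ ⟨φ, hφ, hφ01, hφα, rfl⟩
  have h₁ := tradeoff_le ν (κ := ν₁) hφ hφ01 hφα
  have h₂ := abs_integral_sub_integral_le_tvDist ν₁ ν₂ hφ hφ01
  rw [abs_sub_le_iff] at h₂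
  linarith

end

theorem statement16_general
    {Ω : Type*} [MeasurableSpace Ω] (ν νt νb : Measure Ω)
    (hνt : IsProbabilityMeasure νt)
    (hνb : IsProbabilityMeasure νb) :
    ∀ α ∈ Set.Icc (0 : ℝ) 1,
      |tradeoff ν νt α - tradeoff ν νb α| ≤ tvDist νt νb := by
  intro α hα
  rw [abs_sub_le_iff]
  exact ⟨by linarith [tradeoff_le_tradeoff_add_tvDist ν νt νb hα.1],
    by linarith [tvDist_comm νt νb ▸ tradeoff_le_tradeoff_add_tvDist ν νb νt hα.1]⟩

/-- For probability measures `ν, ν̃, ν̄` on a common measurable space and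
every `α ∈ [0,1]`, `|T(ν, ν̃)(α) - T(ν, ν̄)(α)| ≤ TV(ν̃, ν̄)`. -/
theorem statement16
    {Ω : Type*} [MeasurableSpace Ω] (ν νt νb : Measure Ω)
    (hν : IsProbabilityMeasure ν) (hνt : IsProbabilityMeasure νt)
    (hνb : IsProbabilityMeasure νb) :
    ∀ α ∈ Set.Icc (0 : ℝ) 1,
      |tradeoff ν νt α - tradeoff ν νb α| ≤ tvDist νt νb :=
  statement16_general ν νt νb hνt hνb
end

section
/- Let γ_{k+1} < γ_k be real numbers with Δ := γ_k − γ_{k+1} > 0, and let μ be a probability measure on ℝ with compact support contained in (−∞, γ_{k+1}]. If β ≥ H_μ(γ_k) − Δ·H'_μ(γ_k), then the function γ ↦ (β − H_μ(γ))/(γ − γ_{k+1}) is non-increasing on the interval [γ_k, ∞). -/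
open MeasureTheory Matrix Filter Topology ProbabilityTheory
open scoped ENNReal NNReal

lemma integrable_inv_aux (μ : Measure ℝ) [IsFiniteMeasure μ] (b x : ℝ)
    (hb : ∀ᵐ t ∂μ, t ≤ b) (hx : b < x) :
    Integrable (fun t => (x - t)⁻¹) μ := by
  apply Integrable.mono' (integrable_const ((x - b)⁻¹))
  · exact (measurable_const.sub measurable_id).inv.aestronglyMeasurable
  · filter_upwards [hb] with t ht
    have h1 : (0:ℝ) < x - t := by linarith
    rw [Real.norm_eq_abs, abs_of_pos (by positivity)]
    apply inv_anti₀ (by linarith) (by linarith)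

lemma integrable_sq_inv_aux (μ : Measure ℝ) [IsFiniteMeasure μ] (b x : ℝ)
    (hb : ∀ᵐ t ∂μ, t ≤ b) (hx : b < x) :
    Integrable (fun t => ((x - t)^2)⁻¹) μ := by
  apply Integrable.mono' (integrable_const (((x - b)^2)⁻¹))
  · exact (((measurable_const.sub measurable_id).pow_const 2).inv).aestronglyMeasurable
  · filter_upwards [hb] with t ht
    have h1 : (0:ℝ) < x - t := by linarith
    rw [Real.norm_eq_abs, abs_of_pos (by positivity)]
    apply inv_anti₀ (by nlinarith) (by nlinarith)

set_option maxHeartbeats 1000000 in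
/-- If `β ≥ H_μ(γ_k) - Δ H'_μ(γ_k)` with `Δ = γ_k - γ_{k+1} > 0` and `μ` a
probability measure with compact support contained in `(-∞, γ_{k+1}]`, then
`γ ↦ (β - H_μ(γ))/(γ - γ_{k+1})` is non-increasing on `[γ_k, ∞)`. -/
theorem statement17
    (γk γk1 : ℝ) (hgap : γk1 < γk)
    (μ : Measure ℝ) (hμ : IsProbabilityMeasure μ)
    (hsupp : ∃ a : ℝ, μ (Set.Icc a γk1)ᶜ = 0)
    (β : ℝ) (hβ : hilbert μ γk - (γk - γk1) * hilbertDeriv μ γk ≤ β) :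
    AntitoneOn (fun γ : ℝ => (β - hilbert μ γ) / (γ - γk1)) (Set.Ici γk) := by
  obtain ⟨a, ha⟩ := hsupp
  have hae : ∀ᵐ t ∂μ, t ≤ γk1 := by
    rw [ae_iff]
    refine measure_mono_null ?_ ha
    intro t ht hc
    exact ht hc.2
  intro x hx y hy hxy
  simp only [Set.mem_Ici] at hx hy
  have hbx : γk1 < x := lt_of_lt_of_le hgap hx
  have hby : γk1 < y := lt_of_lt_of_le hgap hy
  simp only
  rw [div_le_div_iff₀ (by linarith) (by linarith)]
  have hix := integrable_inv_aux μ γk1 x hae hbx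
  have hiy := integrable_inv_aux μ γk1 y hae hby
  have hic := integrable_inv_aux μ γk1 γk hae hgap
  have hic2 := integrable_sq_inv_aux μ γk1 γk hae hgap
  have key : hilbert μ x * (y - γk1) - hilbert μ y * (x - γk1)
      ≤ (y - x) * (hilbert μ γk - (γk - γk1) * hilbertDeriv μ γk) := by
    have hL : hilbert μ x * (y - γk1) - hilbert μ y * (x - γk1)
        = ∫ t, ((y - γk1) * (x - t)⁻¹ - (x - γk1) * (y - t)⁻¹) ∂μ := by
      rw [integral_sub (hix.const_mul _) (hiy.const_mul _),
        integral_const_mul, integral_const_mul, hilbert, hilbert]; ring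
    have hR : (y - x) * (hilbert μ γk - (γk - γk1) * hilbertDeriv μ γk)
        = ∫ t, (y - x) * ((γk - t)⁻¹ + (γk - γk1) * ((γk - t)^2)⁻¹) ∂μ := by
      rw [integral_const_mul, integral_add hic (hic2.const_mul _), integral_const_mul,
        hilbert, hilbertDeriv]; ring
    rw [hL, hR]
    apply integral_mono_ae ((hix.const_mul _).sub (hiy.const_mul _))
      ((hic.add (hic2.const_mul _)).const_mul _)
    filter_upwards [hae] with t ht
    have hu : (0:ℝ) < x - t := by linarith
    have hv : (0:ℝ) < y - t := by linarith
    have hw : (0:ℝ) < γk - t := by linarith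
    have huv : (0:ℝ) ≤ (x - t) * (y - t) - (γk - t)^2 := by nlinarith
    have hint1 : (0:ℝ) ≤ (y - x) * (γk - t) * ((x - γk) * (y - γk)) :=
      mul_nonneg (mul_nonneg (by linarith) hw.le)
        (mul_nonneg (by linarith) (by linarith))
    have hint2 : (0:ℝ) ≤ (y - x) * (γk - γk1) * ((x - t) * (y - t) - (γk - t)^2) :=
      mul_nonneg (mul_nonneg (by linarith) (by linarith)) huv
    simp only [Pi.sub_apply, Pi.add_apply]
    rw [sub_le_iff_le_add, ← sub_nonneg]
    have hfs : (y - x) * ((γk - t)⁻¹ + (γk - γk1) * ((γk - t) ^ 2)⁻¹) + (x - γk1) * (y - t)⁻¹ - (y - γk1) * (x - t)⁻¹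
        = (y - x) * ((γk - t) * ((x - γk) * (y - γk))
            + (γk - γk1) * ((x - t) * (y - t) - (γk - t) ^ 2))
          / ((γk - t) ^ 2 * ((x - t) * (y - t))) := by
      field_simp
      ring
    rw [hfs]
    apply div_nonneg _ (by positivity)
    nlinarith [hint1, hint2]
  have h1 : (0:ℝ) ≤ y - x := by linarith
  nlinarith [key, mul_le_mul_of_nonneg_left hβ h1]
end

section
/- Fix ρ > 0 and let X = X^{(p)} satisfy Assumption (DATA) with λ_k(Σ(X^{(p)})) > λ_{k+1}(Σ(X^{(p)})) for every p, and let the privatized estimators B_ρ(w², X) and T_ρ(w², X) and the oracle quantities σ²_min and β(w²) be as defined. Then: (1) for every w² ≥ σ²_min and every ε > 0 there is a constant C ∈ (0,∞), independent of p, such that P(|B_ρ(w², X^{(p)}) − β(w²)| > ε) ≤ C·e^{−p/C} for all p; (2) for every w² > σ²_min there is a constant C ∈ (0,∞) such that P(T_ρ(w², X^{(p)}) = 1) ≥ 1 − C·e^{−p/C} for all p; (3) for every w² < σ²_min there is a constant C ∈ (0,∞) such that P(T_ρ(w², X^{(p)}) = 0) ≥ 1 − C·e^{−p/C} for all p. 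-/
open MeasureTheory Matrix Filter Topology ProbabilityTheory
open scoped ENNReal NNReal

noncomputable section

/-- Empirical `H'_{Σ(X)}`. -/
def empHd (p k : ℕ) (l : Fin p → ℝ) (x : ℝ) : ℝ :=
  -(((p : ℝ))⁻¹ * ∑ i ∈ bulkIdx p k, ((x - l i) ^ 2)⁻¹)

/-- Empirical `H''_{Σ(X)}`. -/
def empHdd (p k : ℕ) (l : Fin p → ℝ) (x : ℝ) : ℝ :=
  2 * ((p : ℝ))⁻¹ * ∑ i ∈ bulkIdx p k, ((x - l i) ^ 3)⁻¹

/-- `D(X) = n²(λ_k - λ_{k+1})/p³`. -/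
def statD (p k n : ℕ) (l : Fin p → ℝ) : ℝ :=
  (n : ℝ) ^ 2 * (eig1 l (k - 1) - eig1 l k) / (p : ℝ) ^ 3

/-- `H(X) = H_{Σ(X)}(λ_k)`. -/
def statH (p k : ℕ) (l : Fin p → ℝ) : ℝ := empH p k l (eig1 l (k - 1))

/-- `v_{ρ,D} = 6n²/(ρ²p³)`. -/
def varD (ρ : ℝ) (p n : ℕ) : ℝ := 6 * (n : ℝ) ^ 2 / (ρ ^ 2 * (p : ℝ) ^ 3)

/-- `v_{ρ,H} = 3p³ H'_{Σ(X)}(λ_k)²/(ρ²n²)`. -/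
def varHv (ρ : ℝ) (p k n : ℕ) (l : Fin p → ℝ) : ℝ :=
  3 * (p : ℝ) ^ 3 * empHd p k l (eig1 l (k - 1)) ^ 2 / (ρ ^ 2 * (n : ℝ) ^ 2)

/-- `v_{ρ,S} = 3p⁹ H''_{Σ(X)}(λ_k)²/(ρ²n⁶)`. -/
def varSv (ρ : ℝ) (p k n : ℕ) (l : Fin p → ℝ) : ℝ :=
  3 * (p : ℝ) ^ 9 * empHdd p k l (eig1 l (k - 1)) ^ 2 / (ρ ^ 2 * (n : ℝ) ^ 6)

/-- `S²_ρ(X) = -(p³/(2n²)) H'_{Σ(X)}(λ_k) + 3√(v_{ρ,S}/p)`. -/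
def statS (ρ : ℝ) (p k n : ℕ) (l : Fin p → ℝ) : ℝ :=
  -((p : ℝ) ^ 3 / (2 * (n : ℝ) ^ 2)) * empHd p k l (eig1 l (k - 1)) +
    3 * Real.sqrt (varSv ρ p k n l / p)

/-- Joint law of the privatized statistics `(D_ρ, H_ρ, S²_ρ-noised)`, three independent
Gaussians centered at the corresponding statistics with (scaled) variances `v/p`. -/
def privLaw (ρ : ℝ) (p k n : ℕ) (l : Fin p → ℝ) : Measure (ℝ × ℝ × ℝ) :=
  (gaussianReal (statD p k n l) (Real.toNNReal (varD ρ p n / p))).prod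
    ((gaussianReal (statH p k l) (Real.toNNReal (varHv ρ p k n l / p))).prod
      (gaussianReal (statS ρ p k n l) (Real.toNNReal (varSv ρ p k n l / p))))

/-- `B_ρ(w², ·)` as a function of the privatized statistics
`ω = (D_ρ, H_ρ, S²_ρ-noised)` (nonnegative parts taken via `max · 0`). -/
def Bfun (w2 : ℝ) (ω : ℝ × ℝ × ℝ) : ℝ :=
  2 * max ω.1 0 * (w2 + Real.sqrt (max (w2 ^ 2 - max ω.2.2 0 * w2) 0)) + max ω.2.1 0

end

/-!
The three privatized statistics are independent Gaussians with variances `O(1/p)`, centred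
at `D(X)`, `H(X)` and `S²_ρ(X)`. These centres converge to `θ²Δ`, `H_μ(γ_k)` and `σ²_min`: the
empirical Hilbert transforms are bulk averages of `(λ_k - t)⁻ⁿ`, and since `λ_k` stays a fixed
distance to the right of the bulk, weak convergence of the bulk spectral measure applies to
them. A Gaussian tail bound then keeps the privatized triple within any fixed distance of its
limit outside an event of probability `O(e^{-cp})`, and `B_ρ(w², ·)` and `S²_{ρ,+}` are
continuous functions of the triple. The finitely many small `p` only enlarge the constant.
-/

def ExpSmall (f : ℕ → ℝ≥0∞) : Prop :=
  ∃ C : ℝ, 0 < C ∧ ∀ p : ℕ, f p ≤ ENNReal.ofReal (C * Real.exp (-(p : ℝ) / C))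

namespace ExpSmall

variable {f g : ℕ → ℝ≥0∞}

lemma mono (hg : ExpSmall g) (hfg : ∀ p, f p ≤ g p) : ExpSmall f :=
  let ⟨C, hC, hgC⟩ := hg
  ⟨C, hC, fun p => (hfg p).trans (hgC p)⟩

lemma of_eventually_le (hf : ∀ p, f p ≤ 1) {K c : ℝ} (hK : 0 < K) (hc : 0 < c)
    (h : ∀ᶠ p in atTop, f p ≤ ENNReal.ofReal (K * Real.exp (-c * p))) : ExpSmall f := by
  obtain ⟨P, hP⟩ := eventually_atTop.mp h
  refine ⟨max (max K c⁻¹) (Real.exp P), by positivity, fun p => ?_⟩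
  set C := max (max K c⁻¹) (Real.exp P)
  have hC1 : 1 ≤ C := (Real.one_le_exp (Nat.cast_nonneg P)).trans (le_max_right _ _)
  rcases le_or_gt P p with hp | hp
  · refine (hP p hp).trans (ENNReal.ofReal_le_ofReal ?_)
    have hcC : C⁻¹ ≤ c := inv_le_of_inv_le₀ hc ((le_max_right _ _).trans (le_max_left _ _))
    gcongr
    · exact (le_max_left _ _).trans (le_max_left _ _)
    · rw [neg_div, neg_mul, neg_le_neg_iff, div_eq_mul_inv, mul_comm]
      gcongr
  · refine (hf p).trans ?_
    rw [← ENNReal.ofReal_one]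
    refine ENNReal.ofReal_le_ofReal ?_
    calc (1 : ℝ) = Real.exp P * Real.exp (-P) := by
          rw [← Real.exp_add, add_neg_cancel, Real.exp_zero]
      _ ≤ C * Real.exp (-(p : ℝ) / C) := by
        gcongr
        · exact le_max_right _ _
        · rw [neg_div, neg_le_neg_iff]
          exact (div_le_self (Nat.cast_nonneg p) hC1).trans (by exact_mod_cast hp.le)

lemma exists_one_sub_le {Ω : Type*} [MeasurableSpace Ω] {P : ℕ → Measure Ω}
    [∀ p, IsProbabilityMeasure (P p)] {A : Set Ω} (hA : MeasurableSet A)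
    (h : ExpSmall fun p => P p Aᶜ) :
    ∃ C : ℝ, 0 < C ∧ ∀ p : ℕ, ENNReal.ofReal (1 - C * Real.exp (-(p : ℝ) / C)) ≤ P p A := by
  obtain ⟨C, hC, hPC⟩ := h
  refine ⟨C, hC, fun p => ?_⟩
  rw [ENNReal.ofReal_sub _ (by positivity), ENNReal.ofReal_one, tsub_le_iff_tsub_le,
    ← prob_compl_eq_one_sub hA]
  exact hPC p

end ExpSmall

lemma hasSubgaussianMGF_sub_gaussianReal (m : ℝ) {v c : ℝ≥0} (hvc : v ≤ c) :
    HasSubgaussianMGF (fun x => x - m) c (gaussianReal m v) where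
  integrable_exp_mul t := by
    simp_rw [mul_sub, Real.exp_sub]
    exact (integrable_exp_mul_gaussianReal t).div_const _
  mgf_le t := by
    rw [mgf_gaussianReal (gaussianReal_map_sub_const m), sub_self, zero_mul, zero_add]
    gcongr

lemma gaussianReal_abs_sub_ge_le (m : ℝ) {v c : ℝ≥0} (hvc : v ≤ c) {t : ℝ} (ht : 0 ≤ t) :
    gaussianReal m v {x | t ≤ |x - m|} ≤ ENNReal.ofReal (2 * Real.exp (-t ^ 2 / (2 * c))) := by
  have h := hasSubgaussianMGF_sub_gaussianReal m hvc
  have hsplit : {x | t ≤ |x - m|} = {x | t ≤ x - m} ∪ {x | t ≤ -(x - m)} := by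
    ext x; simp only [Set.mem_ofPred_eq, Set.mem_union, le_abs]
  calc gaussianReal m v {x | t ≤ |x - m|}
      ≤ gaussianReal m v {x | t ≤ x - m} + gaussianReal m v {x | t ≤ -(x - m)} :=
        hsplit ▸ measure_union_le _ _
    _ = ENNReal.ofReal ((gaussianReal m v).real {x | t ≤ x - m}
          + (gaussianReal m v).real {x | t ≤ -(x - m)}) := by
        rw [ENNReal.ofReal_add measureReal_nonneg measureReal_nonneg, ofReal_measureReal,
          ofReal_measureReal]
    _ ≤ _ := by
        rw [two_mul]
        exact ENNReal.ofReal_le_ofReal (add_le_add (h.measure_ge_le ht) (h.neg.measure_ge_le ht))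

noncomputable def gaussianTriple (m : ℝ × ℝ × ℝ) (u v w : ℝ≥0) : Measure (ℝ × ℝ × ℝ) :=
  (gaussianReal m.1 u).prod ((gaussianReal m.2.1 v).prod (gaussianReal m.2.2 w))

instance (m : ℝ × ℝ × ℝ) (u v w : ℝ≥0) : IsProbabilityMeasure (gaussianTriple m u v w) := by
  unfold gaussianTriple; infer_instance

lemma gaussianTriple_dist_ge_le (m : ℝ × ℝ × ℝ) {u v w c : ℝ≥0} (hu : u ≤ c) (hv : v ≤ c)
    (hw : w ≤ c) {t : ℝ} (ht : 0 ≤ t) :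
    gaussianTriple m u v w {ω | t ≤ dist ω m} ≤
      ENNReal.ofReal (6 * Real.exp (-t ^ 2 / (2 * c))) := by
  set S : ℝ → Set ℝ := fun a => {x | t ≤ |x - a|}
  have hsplit : {ω | t ≤ dist ω m} =
      S m.1 ×ˢ Set.univ ∪ (Set.univ ×ˢ (S m.2.1 ×ˢ Set.univ) ∪
        Set.univ ×ˢ (Set.univ ×ˢ S m.2.2)) := by
    ext ω
    simp [S, Prod.dist_eq, Real.dist_eq]
  have hB := fun a (s : ℝ≥0) (hs : s ≤ c) => gaussianReal_abs_sub_ge_le a hs ht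
  calc gaussianTriple m u v w {ω | t ≤ dist ω m}
      ≤ gaussianReal m.1 u (S m.1) + (gaussianReal m.2.1 v (S m.2.1) +
          gaussianReal m.2.2 w (S m.2.2)) := by
        rw [hsplit]
        refine (measure_union_le _ _).trans (add_le_add ?_ ((measure_union_le _ _).trans ?_))
        · simp [gaussianTriple, Measure.prod_prod]
        · simp [gaussianTriple, Measure.prod_prod]
    _ ≤ ENNReal.ofReal (2 * Real.exp (-t ^ 2 / (2 * c))) +
          (ENNReal.ofReal (2 * Real.exp (-t ^ 2 / (2 * c))) +
            ENNReal.ofReal (2 * Real.exp (-t ^ 2 / (2 * c)))) :=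
        add_le_add (hB _ _ hu) (add_le_add (hB _ _ hv) (hB _ _ hw))
    _ = _ := by
        rw [← ENNReal.ofReal_add (by positivity) (by positivity),
          ← ENNReal.ofReal_add (by positivity) (by positivity)]
        ring_nf

lemma expSmall_gaussianTriple {Φ : ℝ × ℝ × ℝ → ℝ} {M : ℝ × ℝ × ℝ} (hΦ : ContinuousAt Φ M)
    {m : ℕ → ℝ × ℝ × ℝ} (hm : Tendsto m atTop (𝓝 M)) {u v w : ℕ → ℝ≥0} {V : ℝ} (hV : 0 < V)
    (hvar : ∀ᶠ p in atTop, (u p : ℝ) ≤ V / p ∧ (v p : ℝ) ≤ V / p ∧ (w p : ℝ) ≤ V / p)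
    {ε : ℝ} (hε : 0 < ε) :
    ExpSmall fun p => gaussianTriple (m p) (u p) (v p) (w p) {ω | ε < |Φ ω - Φ M|} := by
  obtain ⟨δ, hδ, hΦδ⟩ := Metric.continuousAt_iff.mp hΦ ε hε
  refine ExpSmall.of_eventually_le (fun p => prob_le_one) (K := 6) (c := δ ^ 2 / (8 * V))
    (by norm_num) (by positivity) ?_
  filter_upwards [hvar, hm.eventually (Metric.ball_mem_nhds M (half_pos hδ)),
    eventually_gt_atTop 0] with p ⟨hu, hv, hw⟩ hmp hp
  have hc : ∀ {x : ℝ≥0}, (x : ℝ) ≤ V / p → x ≤ (V / p).toNNReal := fun h =>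
    (Real.le_toNNReal_iff_coe_le (by positivity)).mpr h
  calc gaussianTriple (m p) (u p) (v p) (w p) {ω | ε < |Φ ω - Φ M|}
      ≤ gaussianTriple (m p) (u p) (v p) (w p) {ω | δ / 2 ≤ dist ω (m p)} := by
        refine measure_mono fun ω hω => ?_
        by_contra hfar
        rw [Set.mem_ofPred_eq, not_le] at hfar
        have hnear : dist ω M < δ := by
          linarith [dist_triangle ω (m p) M, Metric.mem_ball.mp hmp, hfar]
        exact (not_lt.mpr (Real.dist_eq _ _ ▸ (hΦδ hnear).le)) hω
    _ ≤ ENNReal.ofReal (6 * Real.exp (-(δ / 2) ^ 2 / (2 * (V / p).toNNReal))) :=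
        gaussianTriple_dist_ge_le _ (hc hu) (hc hv) (hc hw) (by positivity)
    _ = ENNReal.ofReal (6 * Real.exp (-(δ ^ 2 / (8 * V)) * p)) := by
        rw [Real.coe_toNNReal _ (by positivity)]
        congr 3
        field_simp
        ring

lemma lipschitzOnWith_inv_pow (n : ℕ) {δ : ℝ} (hδ : 0 < δ) :
    LipschitzOnWith (n / δ ^ (n + 1)).toNNReal (fun y : ℝ => (y ^ n)⁻¹) (Set.Ici δ) := by
  refine (convex_Ici δ).lipschitzOnWith_of_nnnorm_hasDerivWithin_le
    (f' := fun y => -(n : ℝ) * y ^ (-(n : ℤ) - 1)) (fun y hy => ?_) (fun y hy => ?_)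
  · have hy0 : y ≠ 0 := (hδ.trans_le hy).ne'
    have := (hasDerivAt_zpow (-(n : ℤ)) y (Or.inl hy0)).hasDerivWithinAt (s := Set.Ici δ)
    simpa [_root_.zpow_neg, zpow_natCast] using this
  · have hy0 : 0 < y := hδ.trans_le hy
    rw [← NNReal.coe_le_coe, coe_nnnorm, Real.coe_toNNReal _ (by positivity), norm_mul,
      norm_neg, Real.norm_natCast, Real.norm_of_nonneg (by positivity), div_eq_mul_inv]
    gcongr
    rw [show -(n : ℤ) - 1 = -((n + 1 : ℕ) : ℤ) by push_cast; ring, _root_.zpow_neg,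
      zpow_natCast]
    gcongr
    exact hy

lemma abs_inv_pow_le (n : ℕ) {δ y : ℝ} (hδ : 0 < δ) (hy : δ ≤ y) : |(y ^ n)⁻¹| ≤ (δ ^ n)⁻¹ := by
  rw [abs_of_nonneg (by have := hδ.trans_le hy; positivity)]
  gcongr

noncomputable def bulkMean (p k : ℕ) (g : ℝ → ℝ) (l : Fin p → ℝ) : ℝ :=
  (p : ℝ)⁻¹ * ∑ i ∈ bulkIdx p k, g (l i)

lemma abs_bulkMean_le {p k : ℕ} {g : ℝ → ℝ} {l : Fin p → ℝ} {M : ℝ} (hM : 0 ≤ M)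
    (hg : ∀ i ∈ bulkIdx p k, |g (l i)| ≤ M) : |bulkMean p k g l| ≤ M := by
  have hcard : (p : ℝ)⁻¹ * (bulkIdx p k).card ≤ 1 := by
    rcases (Nat.cast_nonneg p : (0 : ℝ) ≤ p).eq_or_lt with hp | hp
    · simp [← hp]
    · rw [inv_mul_le_one₀ hp]
      exact_mod_cast (Finset.card_le_univ _).trans (Fintype.card_fin p).le
  calc |bulkMean p k g l| ≤ (p : ℝ)⁻¹ * ((bulkIdx p k).card • M) := by
        rw [bulkMean, abs_mul, abs_inv, Nat.abs_cast]
        gcongr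
        exact (Finset.abs_sum_le_sum_abs _ _).trans (Finset.sum_le_card_nsmul _ _ _ hg)
    _ ≤ M := by
        rw [nsmul_eq_mul, ← mul_assoc]
        exact mul_le_of_le_one_left hM hcard

lemma tendsto_inv_natCast_mul_of_tendsto_inv_sub_mul (k : ℕ) {s : ℕ → ℝ} {L : ℝ}
    (h : Tendsto (fun p : ℕ => ((p : ℝ) - k)⁻¹ * s p) atTop (𝓝 L)) :
    Tendsto (fun p : ℕ => (p : ℝ)⁻¹ * s p) atTop (𝓝 L) := by
  have hratio : Tendsto (fun p : ℕ => 1 - (k : ℝ) / p) atTop (𝓝 1) := by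
    simpa using tendsto_const_nhds.sub (tendsto_const_div_atTop_nhds_zero_nat (k : ℝ))
  refine (one_mul L ▸ hratio.mul h).congr' ?_
  filter_upwards [eventually_gt_atTop k] with p hp
  have hpk : (p : ℝ) - k ≠ 0 := sub_ne_zero.mpr (by exact_mod_cast hp.ne')
  have hp0 : (p : ℝ) ≠ 0 := Nat.cast_ne_zero.mpr (by omega)
  field_simp

section BulkMean

variable {k : ℕ} {l : ∀ p, Fin p → ℝ} {μ : Measure ℝ}

lemma tendsto_bulkMean_of_uniform_approx {f : ℝ → ℝ} {L : ℝ}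
    (hf : Tendsto (fun p : ℕ => ((p : ℝ) - k)⁻¹ * ∑ i ∈ bulkIdx p k, f (l p i)) atTop (𝓝 L))
    {g : ℕ → ℝ → ℝ} {e : ℕ → ℝ} (he : Tendsto e atTop (𝓝 0))
    (hge : ∀ᶠ p in atTop, ∀ i ∈ bulkIdx p k, |g p (l p i) - f (l p i)| ≤ e p) :
    Tendsto (fun p => bulkMean p k (g p) (l p)) atTop (𝓝 L) := by
  have hdiff : Tendsto (fun p => bulkMean p k (g p) (l p) - bulkMean p k f (l p))
      atTop (𝓝 0) := by
    refine squeeze_zero_norm' ?_ (by simpa using he.abs)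
    filter_upwards [hge] with p hp
    rw [Real.norm_eq_abs, bulkMean, bulkMean, ← mul_sub, ← Finset.sum_sub_distrib]
    exact abs_bulkMean_le (g := fun t => g p t - f t) (abs_nonneg _)
      fun i hi => (hp i hi).trans (le_abs_self _)
  refine (zero_add L ▸ hdiff.add (tendsto_inv_natCast_mul_of_tendsto_inv_sub_mul k hf)).congr
    fun p => ?_
  rw [bulkMean, bulkMean, sub_add_cancel]

/-- Test the weak convergence against `t ↦ F (x₀ - min t c)`: it is bounded and continuous, and
agrees with `F (x₀ - ·)` on the bulk and `μ`-a.e. -/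
lemma tendsto_bulkMean_comp_sub
    (hweak : ∀ f : BoundedContinuousFunction ℝ ℝ,
      Tendsto (fun p : ℕ => ((p : ℝ) - k)⁻¹ * ∑ i ∈ bulkIdx p k, f (l p i))
        atTop (𝓝 (∫ t, f t ∂μ)))
    {F : ℝ → ℝ} {δ M : ℝ} {K : ℝ≥0} (hF : LipschitzOnWith K F (Set.Ici δ))
    (hFM : ∀ y ∈ Set.Ici δ, |F y| ≤ M) {x : ℕ → ℝ} {x₀ c : ℝ} (hx : Tendsto x atTop (𝓝 x₀))
    (hcx : c + δ < x₀) (hbulk : ∀ᶠ p in atTop, ∀ i ∈ bulkIdx p k, l p i ≤ c)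
    (hμ : ∀ᵐ t ∂μ, t ≤ c) :
    Tendsto (fun p => bulkMean p k (fun t => F (x p - t)) (l p)) atTop
      (𝓝 (∫ t, F (x₀ - t) ∂μ)) := by
  have hmem : ∀ t, x₀ - min t c ∈ Set.Ici δ := fun t => by
    simp only [Set.mem_Ici]; linarith [min_le_right t c]
  let f : BoundedContinuousFunction ℝ ℝ :=
    .ofNormedAddCommGroup (fun t => F (x₀ - min t c))
      (hF.continuousOn.comp_continuous (by fun_prop) hmem) M (fun t => hFM _ (hmem t))
  have hfc : ∀ {t}, t ≤ c → f t = F (x₀ - t) := fun ht => by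
    simp [f, min_eq_left ht]
  have hint : ∫ t, f t ∂μ = ∫ t, F (x₀ - t) ∂μ :=
    integral_congr_ae (hμ.mono fun t ht => hfc ht)
  refine tendsto_bulkMean_of_uniform_approx (hint ▸ hweak f)
    (e := fun p => K * |x p - x₀|) (by simpa using ((hx.sub_const x₀).abs).const_mul (K : ℝ)) ?_
  filter_upwards [hbulk, hx.eventually (lt_mem_nhds (by linarith : c + δ < x₀))]
    with p hp hxp i hi
  have hli := hp i hi
  rw [hfc hli, ← Real.dist_eq]
  calc dist (F (x p - l p i)) (F (x₀ - l p i)) ≤ K * dist (x p - l p i) (x₀ - l p i) :=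
        hF.dist_le_mul _ (by simp only [Set.mem_Ici]; linarith) _
          (by simp only [Set.mem_Ici]; linarith)
    _ = K * |x p - x₀| := by rw [Real.dist_eq, sub_sub_sub_cancel_right]

lemma tendsto_bulkMean_inv_pow
    (hweak : ∀ f : BoundedContinuousFunction ℝ ℝ,
      Tendsto (fun p : ℕ => ((p : ℝ) - k)⁻¹ * ∑ i ∈ bulkIdx p k, f (l p i))
        atTop (𝓝 (∫ t, f t ∂μ)))
    (n : ℕ) {x : ℕ → ℝ} {x₀ c : ℝ} (hx : Tendsto x atTop (𝓝 x₀)) (hcx : c < x₀)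
    (hbulk : ∀ᶠ p in atTop, ∀ i ∈ bulkIdx p k, l p i ≤ c) (hμ : ∀ᵐ t ∂μ, t ≤ c) :
    Tendsto (fun p => bulkMean p k (fun t => ((x p - t) ^ n)⁻¹) (l p)) atTop
      (𝓝 (∫ t, ((x₀ - t) ^ n)⁻¹ ∂μ)) := by
  have hδ : 0 < (x₀ - c) / 2 := by linarith
  exact tendsto_bulkMean_comp_sub hweak (lipschitzOnWith_inv_pow n hδ)
    (fun y hy => abs_inv_pow_le n hδ hy) hx (by linarith) hbulk hμ

end BulkMean

lemma neg_hilbertDeriv_nonneg (μ : Measure ℝ) (x : ℝ) : 0 ≤ -hilbertDeriv μ x := by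
  rw [hilbertDeriv, neg_neg]
  exact integral_nonneg fun t => by positivity

namespace AssumptionDATA

variable {k : ℕ} {θ : ℝ} {γ : ℕ → ℝ} {μ : Measure ℝ} {X : ∀ p, Multiset (Fin p → ℝ)}
  {l : ∀ p, Fin p → ℝ} {U : ∀ p, Matrix (Fin p) (Fin p) ℝ}

lemma theta_pos (h : AssumptionDATA k θ γ μ X l U) : 0 < θ := h.1

lemma gamma_succ_lt (h : AssumptionDATA k θ γ μ X l U) : γ (k + 1) < γ k := by
  obtain ⟨-, -, -, -, -, -, -, -, hgap, -⟩ := h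
  exact hgap

lemma weak_convergence (h : AssumptionDATA k θ γ μ X l U) (f : BoundedContinuousFunction ℝ ℝ) :
    Tendsto (fun p : ℕ => ((p : ℝ) - k)⁻¹ * ∑ i ∈ bulkIdx p k, f (l p i)) atTop
      (𝓝 (∫ t, f t ∂μ)) := by
  obtain ⟨-, -, -, -, -, -, -, -, -, -, -, -, -, hweak⟩ := h
  exact hweak f

lemma tendsto_eig_top (h : AssumptionDATA k θ γ μ X l U) :
    Tendsto (fun p => eig1 (l p) (k - 1)) atTop (𝓝 (γ k)) := by
  obtain ⟨-, -, -, hk, -, -, -, -, -, -, -, -, heig, -⟩ := h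
  exact heig k hk (by omega)

lemma tendsto_eig_bulk (h : AssumptionDATA k θ γ μ X l U) :
    Tendsto (fun p => eig1 (l p) k) atTop (𝓝 (γ (k + 1))) := by
  obtain ⟨-, -, -, -, -, -, -, -, -, -, -, -, heig, -⟩ := h
  exact heig (k + 1) (by omega) le_rfl

lemma eventually_bulk_le (h : AssumptionDATA k θ γ μ X l U) :
    ∀ᶠ p in atTop, ∀ i ∈ bulkIdx p k, l p i ≤ (γ k + γ (k + 1)) / 2 := by
  filter_upwards [h.tendsto_eig_bulk.eventually
    (gt_mem_nhds (show γ (k + 1) < (γ k + γ (k + 1)) / 2 by linarith [h.gamma_succ_lt])),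
    eventually_gt_atTop k] with p hp hkp i hi
  obtain ⟨-, -, -, -, -, -, hanti, -⟩ := h
  refine le_trans ?_ (by simpa [eig1, hkp] using hp.le)
  exact hanti p (Fin.le_def.mpr (Finset.mem_filter.mp hi).2)

lemma ae_le (h : AssumptionDATA k θ γ μ X l U) : ∀ᵐ t ∂μ, t ≤ γ (k + 1) := by
  obtain ⟨-, -, -, -, -, -, -, -, -, -, -, ⟨a, ha⟩, -⟩ := h
  exact measure_mono_null (fun t ht => by simp_all) ha

lemma hilbert_nonneg (h : AssumptionDATA k θ γ μ X l U) : 0 ≤ hilbert μ (γ k) :=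
  integral_nonneg_of_ae (h.ae_le.mono fun t ht => inv_nonneg.mpr (by linarith [h.gamma_succ_lt]))

lemma tendsto_bulkMean_inv_pow (h : AssumptionDATA k θ γ μ X l U) (n : ℕ) :
    Tendsto (fun p => bulkMean p k (fun t => ((eig1 (l p) (k - 1) - t) ^ n)⁻¹) (l p)) atTop
      (𝓝 (∫ t, ((γ k - t) ^ n)⁻¹ ∂μ)) :=
  _root_.tendsto_bulkMean_inv_pow h.weak_convergence n h.tendsto_eig_top
    (by linarith [h.gamma_succ_lt]) h.eventually_bulk_le
    (h.ae_le.mono fun t ht => by linarith [h.gamma_succ_lt])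

lemma tendsto_card_sq_div_cube (h : AssumptionDATA k θ γ μ X l U) :
    Tendsto (fun p : ℕ => (Multiset.card (X p) : ℝ) ^ 2 / (p : ℝ) ^ 3) atTop (𝓝 (θ ^ 2)) := by
  obtain ⟨-, -, hcard, -⟩ := h
  refine (hcard.pow 2).congr fun p => ?_
  rw [div_pow, ← Real.rpow_natCast (_ ^ _) 2, ← Real.rpow_mul (Nat.cast_nonneg p)]
  norm_num

lemma tendsto_cube_div_card_sq (h : AssumptionDATA k θ γ μ X l U) :
    Tendsto (fun p : ℕ => (p : ℝ) ^ 3 / (Multiset.card (X p) : ℝ) ^ 2) atTop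
      (𝓝 ((θ ^ 2)⁻¹)) := by
  simpa only [inv_div] using h.tendsto_card_sq_div_cube.inv₀ (by have := h.theta_pos; positivity)

lemma tendsto_statH (h : AssumptionDATA k θ γ μ X l U) :
    Tendsto (fun p => statH p k (l p)) atTop (𝓝 (hilbert μ (γ k))) := by
  have h1 := h.tendsto_bulkMean_inv_pow 1
  simp only [pow_one] at h1
  exact h1

lemma tendsto_empHd (h : AssumptionDATA k θ γ μ X l U) :
    Tendsto (fun p => empHd p k (l p) (eig1 (l p) (k - 1))) atTop
      (𝓝 (hilbertDeriv μ (γ k))) :=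
  (h.tendsto_bulkMean_inv_pow 2).neg

lemma tendsto_empHdd (h : AssumptionDATA k θ γ μ X l U) :
    Tendsto (fun p => empHdd p k (l p) (eig1 (l p) (k - 1))) atTop
      (𝓝 (2 * ∫ t, ((γ k - t) ^ 3)⁻¹ ∂μ)) :=
  ((h.tendsto_bulkMean_inv_pow 3).const_mul 2).congr fun p => by
    rw [empHdd, bulkMean, mul_assoc]

variable (ρ : ℝ)

lemma tendsto_varD (h : AssumptionDATA k θ γ μ X l U) :
    Tendsto (fun p => varD ρ p (Multiset.card (X p))) atTop (𝓝 (6 * θ ^ 2 / ρ ^ 2)) :=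
  ((h.tendsto_card_sq_div_cube.const_mul 6).div_const (ρ ^ 2)).congr fun p => by
    rw [varD]; ring

lemma tendsto_varHv (h : AssumptionDATA k θ γ μ X l U) :
    Tendsto (fun p => varHv ρ p k (Multiset.card (X p)) (l p)) atTop
      (𝓝 (3 * (θ ^ 2)⁻¹ * hilbertDeriv μ (γ k) ^ 2 / ρ ^ 2)) :=
  (((h.tendsto_cube_div_card_sq.const_mul 3).mul (h.tendsto_empHd.pow 2)).div_const
    (ρ ^ 2)).congr fun p => by rw [varHv]; ring

lemma tendsto_varSv (h : AssumptionDATA k θ γ μ X l U) :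
    Tendsto (fun p => varSv ρ p k (Multiset.card (X p)) (l p)) atTop
      (𝓝 (3 * ((θ ^ 2)⁻¹) ^ 3 * (2 * ∫ t, ((γ k - t) ^ 3)⁻¹ ∂μ) ^ 2 / ρ ^ 2)) :=
  ((((h.tendsto_cube_div_card_sq.pow 3).const_mul 3).mul (h.tendsto_empHdd.pow 2)).div_const
    (ρ ^ 2)).congr fun p => by rw [varSv]; ring

lemma tendsto_statS (h : AssumptionDATA k θ γ μ X l U) :
    Tendsto (fun p => statS ρ p k (Multiset.card (X p)) (l p)) atTop
      (𝓝 (-hilbertDeriv μ (γ k) / (2 * θ ^ 2))) := by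
  have hnoise : Tendsto (fun p : ℕ => 3 * Real.sqrt (varSv ρ p k (Multiset.card (X p)) (l p) / p))
      atTop (𝓝 0) := by
    simpa [div_eq_mul_inv] using
      ((h.tendsto_varSv ρ).mul tendsto_inv_atTop_nhds_zero_nat).sqrt.const_mul 3
  have hlim : -((θ ^ 2)⁻¹ / 2 * hilbertDeriv μ (γ k)) + 0 =
      -hilbertDeriv μ (γ k) / (2 * θ ^ 2) := by
    have := h.theta_pos
    rw [add_zero]
    field_simp
  refine hlim ▸ (((h.tendsto_cube_div_card_sq.div_const 2).mul h.tendsto_empHd).neg.add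
    hnoise).congr fun p => ?_
  rw [statS]; ring

lemma tendsto_privMean (h : AssumptionDATA k θ γ μ X l U) :
    Tendsto (fun p => (statD p k (Multiset.card (X p)) (l p), statH p k (l p),
        statS ρ p k (Multiset.card (X p)) (l p))) atTop
      (𝓝 (θ ^ 2 * (γ k - γ (k + 1)), hilbert μ (γ k), -hilbertDeriv μ (γ k) / (2 * θ ^ 2))) := by
  have hD : Tendsto (fun p => statD p k (Multiset.card (X p)) (l p)) atTop
      (𝓝 (θ ^ 2 * (γ k - γ (k + 1)))) :=
    (h.tendsto_card_sq_div_cube.mul (h.tendsto_eig_top.sub h.tendsto_eig_bulk)).congr fun p => by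
      rw [statD]; ring
  exact hD.prodMk_nhds (h.tendsto_statH.prodMk_nhds (h.tendsto_statS ρ))

lemma exists_privVar_le (h : AssumptionDATA k θ γ μ X l U) :
    ∃ V : ℝ, 0 < V ∧ ∀ᶠ p in atTop, varD ρ p (Multiset.card (X p)) ≤ V ∧
      varHv ρ p k (Multiset.card (X p)) (l p) ≤ V ∧
      varSv ρ p k (Multiset.card (X p)) (l p) ≤ V := by
  obtain ⟨VD, hVD⟩ := (h.tendsto_varD ρ).isBoundedUnder_le
  obtain ⟨VH, hVH⟩ := (h.tendsto_varHv ρ).isBoundedUnder_le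
  obtain ⟨VS, hVS⟩ := (h.tendsto_varSv ρ).isBoundedUnder_le
  refine ⟨max (max VD VH) (max VS 1), lt_max_of_lt_right (lt_max_of_lt_right one_pos), ?_⟩
  filter_upwards [hVD, hVH, hVS] with p hD hH hS
  exact ⟨hD.trans (by simp), hH.trans (by simp), hS.trans (by simp)⟩

end AssumptionDATA

instance (ρ : ℝ) (p k n : ℕ) (l : Fin p → ℝ) : IsProbabilityMeasure (privLaw ρ p k n l) := by
  unfold privLaw; infer_instance

lemma expSmall_privLaw {ρ : ℝ} {k : ℕ} {n : ℕ → ℕ} {l : ∀ p, Fin p → ℝ} {M : ℝ × ℝ × ℝ}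
    (hM : Tendsto (fun p => (statD p k (n p) (l p), statH p k (l p), statS ρ p k (n p) (l p)))
      atTop (𝓝 M)) {V : ℝ} (hV : 0 < V)
    (hvar : ∀ᶠ p in atTop, varD ρ p (n p) ≤ V ∧ varHv ρ p k (n p) (l p) ≤ V ∧
      varSv ρ p k (n p) (l p) ≤ V)
    {Φ : ℝ × ℝ × ℝ → ℝ} (hΦ : ContinuousAt Φ M) {ε : ℝ} (hε : 0 < ε) :
    ExpSmall fun p => privLaw ρ p k (n p) (l p) {ω | ε < |Φ ω - Φ M|} := by
  have hscale : ∀ {s : ℝ} {p : ℕ}, s ≤ V → ((s / p).toNNReal : ℝ) ≤ V / p := fun hs =>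
    (Real.coe_toNNReal' _).trans_le (max_le (by gcongr) (by positivity))
  refine expSmall_gaussianTriple hΦ hM hV ?_ hε
  filter_upwards [hvar] with p ⟨hD, hH, hS⟩
  exact ⟨hscale hD, hscale hH, hscale hS⟩

lemma continuous_Bfun (w2 : ℝ) : Continuous (Bfun w2) := by
  unfold Bfun; fun_prop

lemma Bfun_of_nonneg {w2 D H S : ℝ} (hD : 0 ≤ D) (hH : 0 ≤ H) (hS : 0 ≤ S) (hSw : S ≤ w2) :
    Bfun w2 (D, H, S) = 2 * D * (w2 + Real.sqrt (w2 ^ 2 - S * w2)) + H := by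
  have hq : 0 ≤ w2 ^ 2 - S * w2 := by nlinarith
  simp only [Bfun, max_eq_left hD, max_eq_left hH, max_eq_left hS, max_eq_left hq]

open Filter in
/-- Consistency of the privatized estimator `B_ρ(w², X)` and the private
test `T_ρ(w², X) = 1{w² ≥ S²_{ρ,+}}`, with exponentially small error probabilities.
Here `σ²_min = -H'_μ(γ_k)/(2θ²)` and, for `w² ≥ σ²_min`,
`β(w²) = 2θ²Δ(w² + √((w²)² - σ²_min w²)) + H_μ(γ_k)`. -/
theorem statement19
    (ρ : ℝ)
    (k : ℕ) (θ : ℝ) (γ : ℕ → ℝ) (μ : Measure ℝ)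
    (X : ∀ p, Multiset (Fin p → ℝ)) (l : ∀ p, Fin p → ℝ)
    (U : ∀ p, Matrix (Fin p) (Fin p) ℝ)
    (hDATA : AssumptionDATA k θ γ μ X l U) :
    -- (1) consistency of `B_ρ(w², X)` for `w² ≥ σ²_min`
    (∀ w2 : ℝ, -hilbertDeriv μ (γ k) / (2 * θ ^ 2) ≤ w2 →
      ∀ ε : ℝ, 0 < ε → ∃ C : ℝ, 0 < C ∧
        ∀ p : ℕ,
          privLaw ρ p k (Multiset.card (X p)) (l p)
              {ω : ℝ × ℝ × ℝ |
                ε < |Bfun w2 ω -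
                  (2 * θ ^ 2 * (γ k - γ (k + 1)) *
                      (w2 + Real.sqrt (w2 ^ 2 -
                        (-hilbertDeriv μ (γ k) / (2 * θ ^ 2)) * w2)) +
                    hilbert μ (γ k))|} ≤
            ENNReal.ofReal (C * Real.exp (-(p : ℝ) / C))) ∧
    -- (2) the test accepts w.h.p. when `w² > σ²_min`
    (∀ w2 : ℝ, -hilbertDeriv μ (γ k) / (2 * θ ^ 2) < w2 →
      ∃ C : ℝ, 0 < C ∧
        ∀ p : ℕ,
          ENNReal.ofReal (1 - C * Real.exp (-(p : ℝ) / C)) ≤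
            privLaw ρ p k (Multiset.card (X p)) (l p)
              {ω : ℝ × ℝ × ℝ | max ω.2.2 0 ≤ w2}) ∧
    -- (3) the test rejects w.h.p. when `w² < σ²_min`
    (∀ w2 : ℝ, w2 < -hilbertDeriv μ (γ k) / (2 * θ ^ 2) →
      ∃ C : ℝ, 0 < C ∧
        ∀ p : ℕ,
          ENNReal.ofReal (1 - C * Real.exp (-(p : ℝ) / C)) ≤
            privLaw ρ p k (Multiset.card (X p)) (l p)
              {ω : ℝ × ℝ × ℝ | w2 < max ω.2.2 0}) := by
  set σ2 := -hilbertDeriv μ (γ k) / (2 * θ ^ 2)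
  obtain ⟨V, hV, hvar⟩ := hDATA.exists_privVar_le ρ
  have hconc := fun {Φ} (hΦ : Continuous Φ) {ε : ℝ} (hε : 0 < ε) =>
    expSmall_privLaw (hDATA.tendsto_privMean ρ) hV hvar hΦ.continuousAt hε
  have hσ2 : 0 ≤ σ2 := div_nonneg (neg_hilbertDeriv_nonneg μ (γ k))
    (by have := hDATA.theta_pos; positivity)
  have hS : Continuous fun ω : ℝ × ℝ × ℝ => ω.2.2 := by fun_prop
  refine ⟨fun w2 hw2 ε hε => ?_, fun w2 hw2 => ?_, fun w2 hw2 => ?_⟩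
  · have hΔ : 0 ≤ θ ^ 2 * (γ k - γ (k + 1)) := by have := hDATA.gamma_succ_lt; positivity
    rw [mul_assoc 2, ← Bfun_of_nonneg hΔ hDATA.hilbert_nonneg hσ2 hw2]
    exact hconc (continuous_Bfun w2) hε
  · refine ((hconc hS (sub_pos.mpr hw2)).mono fun p => measure_mono fun ω hω => ?_
      ).exists_one_sub_le (measurableSet_le (by fun_prop) (by fun_prop))
    simp only [Set.mem_compl_iff, Set.mem_ofPred_eq, not_le, lt_max_iff] at hω ⊢
    exact lt_abs.mpr (Or.inl (by linarith [hω.resolve_right (by linarith)]))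
  · refine ((hconc hS (half_pos (sub_pos.mpr hw2))).mono fun p => measure_mono fun ω hω => ?_
      ).exists_one_sub_le (measurableSet_lt (by fun_prop) (by fun_prop))
    simp only [Set.mem_compl_iff, Set.mem_ofPred_eq, not_lt, max_le_iff] at hω ⊢
    rw [lt_abs]; right; linarith
end
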